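/- arXiv:math-ph/0703018 — 9 statements merged into one kernel-verified Lean document; each statement's English description precedes it below -/
import Mathlib

section
/- Let E, B, V, W : ℝ³ × ℝ → ℝ³ be smooth vector fields satisfying the symmetrized Maxwell equations curl E + ∂B/∂t + σₘ B = 0, curl B − ∂E/∂t − σₑ E = 0, and the adjoint equations curl V + ∂W/∂t − σₑ W = 0, curl W − ∂V/∂t + σₘ V = 0. Define τ = E·V + B·W and χ = E × W − B × V. Then ∂τ/∂t + div χ = (σₘ − σₑ)(E·V − B·W). In particular, if σₘ = σₑ then ∂τ/∂t + div χ = 0. -/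
noncomputable section

abbrev V3 : Type := Fin 3 → ℝ

def dot3 (a b : V3) : ℝ := a 0 * b 0 + a 1 * b 1 + a 2 * b 2

def cross3 (a b : V3) : V3 :=
  ![a 1 * b 2 - a 2 * b 1, a 2 * b 0 - a 0 * b 2, a 0 * b 1 - a 1 * b 0]

/-- spatial partial derivative of a scalar field on ℝ³ -/
def pd (i : Fin 3) (f : V3 → ℝ) (x : V3) : ℝ := fderiv ℝ f x (Pi.single i 1)

/-- spatial divergence -/
def div3 (F : V3 → V3) (x : V3) : ℝ :=
  pd 0 (fun y => F y 0) x + pd 1 (fun y => F y 1) x + pd 2 (fun y => F y 2) x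

/-- spatial curl -/
def curl3 (F : V3 → V3) (x : V3) : V3 :=
  ![pd 1 (fun y => F y 2) x - pd 2 (fun y => F y 1) x,
    pd 2 (fun y => F y 0) x - pd 0 (fun y => F y 2) x,
    pd 0 (fun y => F y 1) x - pd 1 (fun y => F y 0) x]

/-- time derivative of a time-dependent vector field -/
def dt (F : V3 → ℝ → V3) (x : V3) (t : ℝ) : V3 := fun i => deriv (fun s => F x s i) t

/-- smoothness of a time-dependent vector field -/
def Smooth2 (F : V3 → ℝ → V3) : Prop := ContDiff ℝ (⊤ : ℕ∞) (fun p : V3 × ℝ => F p.1 p.2)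

/-- smoothness of a time-dependent scalar field -/
def SmoothS (f : V3 → ℝ → ℝ) : Prop := ContDiff ℝ (⊤ : ℕ∞) (fun p : V3 × ℝ => f p.1 p.2)

lemma pd_mul (i : Fin 3) {f g : V3 → ℝ} {x : V3}
    (hf : DifferentiableAt ℝ f x) (hg : DifferentiableAt ℝ g x) :
    pd i (fun y => f y * g y) x = pd i f x * g x + f x * pd i g x := by
  unfold pd
  rw [fderiv_fun_mul hf hg]
  simp [ContinuousLinearMap.add_apply, ContinuousLinearMap.smul_apply, smul_eq_mul]
  ring

lemma pd_sub (i : Fin 3) {f g : V3 → ℝ} {x : V3}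
    (hf : DifferentiableAt ℝ f x) (hg : DifferentiableAt ℝ g x) :
    pd i (fun y => f y - g y) x = pd i f x - pd i g x := by
  unfold pd
  rw [fderiv_fun_sub hf hg]
  simp

lemma pd_combo (i : Fin 3) (a b c d p q r s : V3 → ℝ) (x : V3)
    (ha : Differentiable ℝ a) (hb : Differentiable ℝ b)
    (hc : Differentiable ℝ c) (hd : Differentiable ℝ d)
    (hp : Differentiable ℝ p) (hq : Differentiable ℝ q)
    (hr : Differentiable ℝ r) (hs : Differentiable ℝ s) :
    pd i (fun y => a y * b y - c y * d y - (p y * q y - r y * s y)) x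
      = (pd i a x * b x + a x * pd i b x) - (pd i c x * d x + c x * pd i d x)
        - ((pd i p x * q x + p x * pd i q x) - (pd i r x * s x + r x * pd i s x)) := by
  rw [pd_sub i (f := fun y => a y * b y - c y * d y) (g := fun y => p y * q y - r y * s y)
        (((ha x).mul (hb x)).sub ((hc x).mul (hd x)))
        (((hp x).mul (hq x)).sub ((hr x).mul (hs x))),
      pd_sub i (f := fun y => a y * b y) (g := fun y => c y * d y) ((ha x).mul (hb x)) ((hc x).mul (hd x)),
      pd_sub i (f := fun y => p y * q y) (g := fun y => r y * s y) ((hp x).mul (hq x)) ((hr x).mul (hs x)),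
      pd_mul i (ha x) (hb x), pd_mul i (hc x) (hd x),
      pd_mul i (hp x) (hq x), pd_mul i (hr x) (hs x)]

/-- the duality conservation law for the Maxwell–Dirac system with
dual Ohm's law, together with its adjoint system. -/
theorem stmt0 (σe σm : ℝ) (E B V W : V3 → ℝ → V3)
    (hE : Smooth2 E) (hB : Smooth2 B) (hV : Smooth2 V) (hW : Smooth2 W)
    (h1 : ∀ x t, curl3 (fun y => E y t) x + dt B x t + σm • B x t = 0)
    (h2 : ∀ x t, curl3 (fun y => B y t) x - dt E x t - σe • E x t = 0)
    (h3 : ∀ x t, curl3 (fun y => V y t) x + dt W x t - σe • W x t = 0)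
    (h4 : ∀ x t, curl3 (fun y => W y t) x - dt V x t + σm • V x t = 0) :
    (∀ x t,
      deriv (fun s => dot3 (E x s) (V x s) + dot3 (B x s) (W x s)) t
        + div3 (fun y => cross3 (E y t) (W y t) - cross3 (B y t) (V y t)) x
      = (σm - σe) * (dot3 (E x t) (V x t) - dot3 (B x t) (W x t)))
    ∧ (σm = σe → ∀ x t,
      deriv (fun s => dot3 (E x s) (V x s) + dot3 (B x s) (W x s)) t
        + div3 (fun y => cross3 (E y t) (W y t) - cross3 (B y t) (V y t)) x = 0) := by
  have main : ∀ x t,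
      deriv (fun s => dot3 (E x s) (V x s) + dot3 (B x s) (W x s)) t
        + div3 (fun y => cross3 (E y t) (W y t) - cross3 (B y t) (V y t)) x
      = (σm - σe) * (dot3 (E x t) (V x t) - dot3 (B x t) (W x t)) := by
    intro x t
    have dE : ∀ i, Differentiable ℝ (fun p : V3 × ℝ => E p.1 p.2 i) := fun i =>
      (contDiff_pi.mp hE i).differentiable (by simp)
    have dB : ∀ i, Differentiable ℝ (fun p : V3 × ℝ => B p.1 p.2 i) := fun i =>
      (contDiff_pi.mp hB i).differentiable (by simp)
    have dV : ∀ i, Differentiable ℝ (fun p : V3 × ℝ => V p.1 p.2 i) := fun i =>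
      (contDiff_pi.mp hV i).differentiable (by simp)
    have dW : ∀ i, Differentiable ℝ (fun p : V3 × ℝ => W p.1 p.2 i) := fun i =>
      (contDiff_pi.mp hW i).differentiable (by simp)
    have sE : ∀ i, Differentiable ℝ (fun y : V3 => E y t i) := fun i =>
      (dE i).comp (differentiable_id.prodMk (differentiable_const t))
    have sB : ∀ i, Differentiable ℝ (fun y : V3 => B y t i) := fun i =>
      (dB i).comp (differentiable_id.prodMk (differentiable_const t))
    have sV : ∀ i, Differentiable ℝ (fun y : V3 => V y t i) := fun i =>
      (dV i).comp (differentiable_id.prodMk (differentiable_const t))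
    have sW : ∀ i, Differentiable ℝ (fun y : V3 => W y t i) := fun i =>
      (dW i).comp (differentiable_id.prodMk (differentiable_const t))
    have tE : ∀ i, HasDerivAt (fun s => E x s i) (deriv (fun s => E x s i) t) t := fun i =>
      (((dE i).comp ((differentiable_const x).prodMk differentiable_id)) t).hasDerivAt
    have tB : ∀ i, HasDerivAt (fun s => B x s i) (deriv (fun s => B x s i) t) t := fun i =>
      (((dB i).comp ((differentiable_const x).prodMk differentiable_id)) t).hasDerivAt
    have tV : ∀ i, HasDerivAt (fun s => V x s i) (deriv (fun s => V x s i) t) t := fun i =>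
      (((dV i).comp ((differentiable_const x).prodMk differentiable_id)) t).hasDerivAt
    have tW : ∀ i, HasDerivAt (fun s => W x s i) (deriv (fun s => W x s i) t) t := fun i =>
      (((dW i).comp ((differentiable_const x).prodMk differentiable_id)) t).hasDerivAt
    have hτ : deriv (fun s => E x s 0 * V x s 0 + E x s 1 * V x s 1 + E x s 2 * V x s 2 +
        (B x s 0 * W x s 0 + B x s 1 * W x s 1 + B x s 2 * W x s 2)) t = _ := (((((tE 0).mul (tV 0)).add ((tE 1).mul (tV 1))).add ((tE 2).mul (tV 2))).add
      ((((tB 0).mul (tW 0)).add ((tB 1).mul (tW 1))).add ((tB 2).mul (tW 2)))).deriv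
    have e10 := congrFun (h1 x t) 0
    have e11 := congrFun (h1 x t) 1
    have e12 := congrFun (h1 x t) 2
    have e20 := congrFun (h2 x t) 0
    have e21 := congrFun (h2 x t) 1
    have e22 := congrFun (h2 x t) 2
    have e30 := congrFun (h3 x t) 0
    have e31 := congrFun (h3 x t) 1
    have e32 := congrFun (h3 x t) 2
    have e40 := congrFun (h4 x t) 0
    have e41 := congrFun (h4 x t) 1
    have e42 := congrFun (h4 x t) 2
    simp only [curl3, dt, Pi.add_apply, Pi.sub_apply, Pi.smul_apply, smul_eq_mul,
      Pi.zero_apply, Matrix.cons_val_zero, Matrix.cons_val_one, Matrix.head_cons,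
      Matrix.cons_val_two, Matrix.tail_cons] at e10 e11 e12 e20 e21 e22 e30 e31 e32 e40 e41 e42
    simp only [dot3, div3, cross3, Pi.sub_apply, Matrix.cons_val_zero, Matrix.cons_val_one,
      Matrix.head_cons, Matrix.cons_val_two, Matrix.tail_cons]
    rw [hτ,
      pd_combo 0 (fun y => E y t 1) (fun y => W y t 2) (fun y => E y t 2) (fun y => W y t 1)
        (fun y => B y t 1) (fun y => V y t 2) (fun y => B y t 2) (fun y => V y t 1) x
        (sE 1) (sW 2) (sE 2) (sW 1) (sB 1) (sV 2) (sB 2) (sV 1),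
      pd_combo 1 (fun y => E y t 2) (fun y => W y t 0) (fun y => E y t 0) (fun y => W y t 2)
        (fun y => B y t 2) (fun y => V y t 0) (fun y => B y t 0) (fun y => V y t 2) x
        (sE 2) (sW 0) (sE 0) (sW 2) (sB 2) (sV 0) (sB 0) (sV 2),
      pd_combo 2 (fun y => E y t 0) (fun y => W y t 1) (fun y => E y t 1) (fun y => W y t 0)
        (fun y => B y t 0) (fun y => V y t 1) (fun y => B y t 1) (fun y => V y t 0) x
        (sE 0) (sW 1) (sE 1) (sW 0) (sB 0) (sV 1) (sB 1) (sV 0)]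
    linear_combination W x t 0 * e10 + W x t 1 * e11 + W x t 2 * e12
      - V x t 0 * e20 - V x t 1 * e21 - V x t 2 * e22
      + B x t 0 * e30 + B x t 1 * e31 + B x t 2 * e32
      - E x t 0 * e40 - E x t 1 * e41 - E x t 2 * e42
  exact ⟨main, fun h x t => by rw [main x t, h]; ring⟩
end
end

section
/- Let E, B, V, W : ℝ³ × ℝ → ℝ³ be smooth vector fields satisfying curl E + ∂B/∂t + σₘ B = 0, curl B − ∂E/∂t − σₑ E = 0 and the adjoint system curl V + ∂W/∂t − σₑ W = 0, curl W − ∂V/∂t + σₘ V = 0. Then the quantity τ = B·V − E·W and the flux χ = E × V + B × W satisfy the conservation law ∂τ/∂t + div χ = 0, for arbitrary constants σₑ and σₘ. -/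
noncomputable section

lemma smooth_space (F : V3 → ℝ → V3) (hF : Smooth2 F) (i : Fin 3) (x : V3) (t : ℝ) :
    DifferentiableAt ℝ (fun y => F y t i) x := by
  have h := ((contDiff_pi.mp hF i).differentiable (by simp)) (x, t)
  exact h.comp x (by
    have hg : DifferentiableAt ℝ (fun y : V3 => (y, t)) x :=
      differentiableAt_id.prodMk (differentiableAt_const t)
    exact hg)

lemma smooth_time (F : V3 → ℝ → V3) (hF : Smooth2 F) (i : Fin 3) (x : V3) (t : ℝ) :
    DifferentiableAt ℝ (fun s => F x s i) t := by
  have h := ((contDiff_pi.mp hF i).differentiable (by simp)) (x, t)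
  exact h.comp t ((differentiableAt_const x).prodMk differentiableAt_id)

lemma pd_comb (i : Fin 3) (a b c d e f g h : V3 → ℝ) (x : V3)
    (ha : DifferentiableAt ℝ a x) (hb : DifferentiableAt ℝ b x)
    (hc : DifferentiableAt ℝ c x) (hd : DifferentiableAt ℝ d x)
    (he : DifferentiableAt ℝ e x) (hf : DifferentiableAt ℝ f x)
    (hg : DifferentiableAt ℝ g x) (hh : DifferentiableAt ℝ h x) :
    pd i (fun y => a y * b y - c y * d y + (e y * f y - g y * h y)) x =
      pd i a x * b x + a x * pd i b x - (pd i c x * d x + c x * pd i d x) +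
      (pd i e x * f x + e x * pd i f x - (pd i g x * h x + g x * pd i h x)) := by
  unfold pd
  rw [fderiv_fun_add (f := fun y => a y * b y - c y * d y) (g := fun y => e y * f y - g y * h y) ((ha.mul hb).sub (hc.mul hd)) ((he.mul hf).sub (hg.mul hh)),
      fderiv_fun_sub (f := fun y => a y * b y) (g := fun y => c y * d y) (ha.mul hb) (hc.mul hd),
      fderiv_fun_sub (f := fun y => e y * f y) (g := fun y => g y * h y) (he.mul hf) (hg.mul hh),
      fderiv_fun_mul ha hb, fderiv_fun_mul hc hd, fderiv_fun_mul he hf, fderiv_fun_mul hg hh]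
  simp only [ContinuousLinearMap.add_apply, ContinuousLinearMap.sub_apply,
    ContinuousLinearMap.smul_apply, smul_eq_mul]
  ring

/-- the dilation-symmetry conservation law, valid for arbitrary
conductivities σₑ, σₘ. -/
theorem stmt1 (σe σm : ℝ) (E B V W : V3 → ℝ → V3)
    (hE : Smooth2 E) (hB : Smooth2 B) (hV : Smooth2 V) (hW : Smooth2 W)
    (h1 : ∀ x t, curl3 (fun y => E y t) x + dt B x t + σm • B x t = 0)
    (h2 : ∀ x t, curl3 (fun y => B y t) x - dt E x t - σe • E x t = 0)
    (h3 : ∀ x t, curl3 (fun y => V y t) x + dt W x t - σe • W x t = 0)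
    (h4 : ∀ x t, curl3 (fun y => W y t) x - dt V x t + σm • V x t = 0) :
    ∀ x t,
      deriv (fun s => dot3 (B x s) (V x s) - dot3 (E x s) (W x s)) t
        + div3 (fun y => cross3 (E y t) (V y t) + cross3 (B y t) (W y t)) x = 0 := by
  intro x t
  -- time differentiability
  have hEt : ∀ i, HasDerivAt (fun s => E x s i) (deriv (fun s => E x s i) t) t :=
    fun i => (smooth_time E hE i x t).hasDerivAt
  have hBt : ∀ i, HasDerivAt (fun s => B x s i) (deriv (fun s => B x s i) t) t :=
    fun i => (smooth_time B hB i x t).hasDerivAt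
  have hVt : ∀ i, HasDerivAt (fun s => V x s i) (deriv (fun s => V x s i) t) t :=
    fun i => (smooth_time V hV i x t).hasDerivAt
  have hWt : ∀ i, HasDerivAt (fun s => W x s i) (deriv (fun s => W x s i) t) t :=
    fun i => (smooth_time W hW i x t).hasDerivAt
  -- the time derivative of the density
  have Hd : HasDerivAt (fun s => dot3 (B x s) (V x s) - dot3 (E x s) (W x s))
      ((deriv (fun s => B x s 0) t * V x t 0 + B x t 0 * deriv (fun s => V x s 0) t +
        (deriv (fun s => B x s 1) t * V x t 1 + B x t 1 * deriv (fun s => V x s 1) t) +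
        (deriv (fun s => B x s 2) t * V x t 2 + B x t 2 * deriv (fun s => V x s 2) t)) -
       (deriv (fun s => E x s 0) t * W x t 0 + E x t 0 * deriv (fun s => W x s 0) t +
        (deriv (fun s => E x s 1) t * W x t 1 + E x t 1 * deriv (fun s => W x s 1) t) +
        (deriv (fun s => E x s 2) t * W x t 2 + E x t 2 * deriv (fun s => W x s 2) t))) t := by
    unfold dot3
    exact ((((hBt 0).mul (hVt 0)).add ((hBt 1).mul (hVt 1))).add ((hBt 2).mul (hVt 2))).sub
      ((((hEt 0).mul (hWt 0)).add ((hEt 1).mul (hWt 1))).add ((hEt 2).mul (hWt 2)))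
  rw [Hd.deriv]
  -- componentwise field equations
  have hB' : ∀ i, deriv (fun s => B x s i) t
      = -(curl3 (fun y => E y t) x i) - σm * B x t i := by
    intro i
    have := congrFun (h1 x t) i
    simp only [Pi.add_apply, Pi.smul_apply, Pi.zero_apply, smul_eq_mul, dt] at this
    linarith
  have hE' : ∀ i, deriv (fun s => E x s i) t
      = curl3 (fun y => B y t) x i - σe * E x t i := by
    intro i
    have := congrFun (h2 x t) i
    simp only [Pi.sub_apply, Pi.smul_apply, Pi.zero_apply, smul_eq_mul, dt] at this
    linarith
  have hW' : ∀ i, deriv (fun s => W x s i) t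
      = -(curl3 (fun y => V y t) x i) + σe * W x t i := by
    intro i
    have := congrFun (h3 x t) i
    simp only [Pi.add_apply, Pi.sub_apply, Pi.smul_apply, Pi.zero_apply, smul_eq_mul, dt] at this
    linarith
  have hV' : ∀ i, deriv (fun s => V x s i) t
      = curl3 (fun y => W y t) x i + σm * V x t i := by
    intro i
    have := congrFun (h4 x t) i
    simp only [Pi.sub_apply, Pi.add_apply, Pi.smul_apply, Pi.zero_apply, smul_eq_mul, dt] at this
    linarith
  rw [hB' 0, hB' 1, hB' 2, hE' 0, hE' 1, hE' 2, hV' 0, hV' 1, hV' 2, hW' 0, hW' 1, hW' 2]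
  -- spatial differentiability
  have hEx : ∀ i, DifferentiableAt ℝ (fun y => E y t i) x := fun i => smooth_space E hE i x t
  have hBx : ∀ i, DifferentiableAt ℝ (fun y => B y t i) x := fun i => smooth_space B hB i x t
  have hVx : ∀ i, DifferentiableAt ℝ (fun y => V y t i) x := fun i => smooth_space V hV i x t
  have hWx : ∀ i, DifferentiableAt ℝ (fun y => W y t i) x := fun i => smooth_space W hW i x t
  -- expand the divergence
  simp only [div3, cross3, Pi.add_apply, Matrix.cons_val_zero, Matrix.cons_val_one,
    Matrix.head_cons, Matrix.cons_val_two, Matrix.tail_cons]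
  rw [pd_comb 0 _ _ _ _ _ _ _ _ x (hEx 1) (hVx 2) (hEx 2) (hVx 1) (hBx 1) (hWx 2) (hBx 2) (hWx 1),
      pd_comb 1 _ _ _ _ _ _ _ _ x (hEx 2) (hVx 0) (hEx 0) (hVx 2) (hBx 2) (hWx 0) (hBx 0) (hWx 2),
      pd_comb 2 _ _ _ _ _ _ _ _ x (hEx 0) (hVx 1) (hEx 1) (hVx 0) (hBx 0) (hWx 1) (hBx 1) (hWx 0)]
  simp only [curl3, Matrix.cons_val_zero, Matrix.cons_val_one, Matrix.head_cons,
    Matrix.cons_val_two, Matrix.tail_cons]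
  ring
end
end

section
/- Let E, B : ℝ³ × ℝ → ℝ³ be smooth solutions of curl E + ∂B/∂t + σ B = 0 and curl B − ∂E/∂t − σ E = 0 for a constant σ. Define τ(x,t) = (E¹(x,t) + B¹(x,t)) e^{σt} and χ(x,t) = (0, (E³(x,t) − B³(x,t)) e^{σt}, (B²(x,t) − E²(x,t)) e^{σt}). Then ∂τ/∂t + div χ = 0. -/
noncomputable section

/-- the explicit time-nonlocal conservation law obtained from the
simple adjoint solution V = W = (e^{σt},0,0). -/
theorem stmt4 (σ : ℝ) (E B : V3 → ℝ → V3)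
    (hE : Smooth2 E) (hB : Smooth2 B)
    (h1 : ∀ x t, curl3 (fun y => E y t) x + dt B x t + σ • B x t = 0)
    (h2 : ∀ x t, curl3 (fun y => B y t) x - dt E x t - σ • E x t = 0) :
    ∀ x t,
      deriv (fun s => (E x s 0 + B x s 0) * Real.exp (σ * s)) t
        + div3 (fun y =>
            ![0, (E y t 2 - B y t 2) * Real.exp (σ * t),
                 (B y t 1 - E y t 1) * Real.exp (σ * t)]) x = 0 := by
  intro x t
  set c := Real.exp (σ * t) with hc
  have hEd : Differentiable ℝ (fun p : V3 × ℝ => E p.1 p.2) := hE.differentiable (by simp)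
  have hBd : Differentiable ℝ (fun p : V3 × ℝ => B p.1 p.2) := hB.differentiable (by simp)
  have hEt : ∀ i : Fin 3, Differentiable ℝ (fun s => E x s i) := fun i =>
    differentiable_pi.mp (hEd.comp ((differentiable_const x).prodMk differentiable_id)) i
  have hBt : ∀ i : Fin 3, Differentiable ℝ (fun s => B x s i) := fun i =>
    differentiable_pi.mp (hBd.comp ((differentiable_const x).prodMk differentiable_id)) i
  have hEs : ∀ i : Fin 3, Differentiable ℝ (fun y : V3 => E y t i) := fun i =>
    differentiable_pi.mp (hEd.comp (differentiable_id.prodMk (differentiable_const t))) i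
  have hBs : ∀ i : Fin 3, Differentiable ℝ (fun y : V3 => B y t i) := fun i =>
    differentiable_pi.mp (hBd.comp (differentiable_id.prodMk (differentiable_const t))) i
  have hexp : HasDerivAt (fun s : ℝ => Real.exp (σ * s)) (Real.exp (σ * t) * σ) t := by
    simpa using ((hasDerivAt_id t).const_mul σ).exp
  have hsum : HasDerivAt (fun s => E x s 0 + B x s 0)
      (deriv (fun s => E x s 0) t + deriv (fun s => B x s 0) t) t :=
    ((hEt 0 t).hasDerivAt).add ((hBt 0 t).hasDerivAt)
  have hd1 : deriv (fun s => (E x s 0 + B x s 0) * Real.exp (σ * s)) t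
      = (deriv (fun s => E x s 0) t + deriv (fun s => B x s 0) t) * c
        + (E x t 0 + B x t 0) * (c * σ) := (hsum.mul hexp).deriv
  have hpd0 : pd 0 (fun _ : V3 => (0:ℝ)) x = 0 := by simp [pd]
  have hpd1 : pd 1 (fun y => (E y t 2 - B y t 2) * c) x
      = (pd 1 (fun y => E y t 2) x - pd 1 (fun y => B y t 2) x) * c := by
    unfold pd
    rw [fderiv_mul_const ((hEs 2 x).fun_sub (hBs 2 x)), fderiv_fun_sub (hEs 2 x) (hBs 2 x)]
    simp [mul_comm]
  have hpd2 : pd 2 (fun y => (B y t 1 - E y t 1) * c) x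
      = (pd 2 (fun y => B y t 1) x - pd 2 (fun y => E y t 1) x) * c := by
    unfold pd
    rw [fderiv_mul_const ((hBs 1 x).fun_sub (hEs 1 x)), fderiv_fun_sub (hBs 1 x) (hEs 1 x)]
    simp [mul_comm]
  have e1 := congrFun (h1 x t) 0
  have e2 := congrFun (h2 x t) 0
  simp only [curl3, dt, Pi.add_apply, Pi.smul_apply, Pi.sub_apply, Pi.zero_apply,
    Matrix.cons_val_zero, smul_eq_mul] at e1 e2
  rw [hd1]
  simp only [div3, Matrix.cons_val_zero, Matrix.cons_val_one, Matrix.head_cons,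
    Matrix.cons_val_two, Matrix.tail_cons]
  rw [hpd0, hpd1, hpd2]
  linear_combination c * e1 - c * e2
end
end

section
/- Let E, B, V, W be smooth vector fields on ℝ³ × ℝ satisfying curl E + ∂B/∂t + σₘ B = 0, curl B − ∂E/∂t − σₑ E = 0, curl V + ∂W/∂t − σₑ W = 0, and curl W − ∂V/∂t + σₘ V = 0. Define τ = (∂E/∂t)·W − (∂B/∂t)·V and χ = V × (∂E/∂t) + W × (∂B/∂t). Then ∂τ/∂t + div χ = 0. -/
noncomputable section

namespace Stmt5Aux

open ContinuousLinearMap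

variable {f : V3 → ℝ → ℝ} {x : V3} {t : ℝ} {i : Fin 3}

/-- uncurried version -/
def unc (f : V3 → ℝ → ℝ) : V3 × ℝ → ℝ := fun p => f p.1 p.2

lemma hasFDerivAt_unc (hf : SmoothS f) (p : V3 × ℝ) :
    HasFDerivAt (unc f) (fderiv ℝ (unc f) p) p :=
  (hf.differentiable (by simp) p).hasFDerivAt

lemma hasFDerivAt_fderiv_unc (hf : SmoothS f) (p : V3 × ℝ) :
    HasFDerivAt (fderiv ℝ (unc f)) (fderiv ℝ (fderiv ℝ (unc f)) p) p :=
  (((hf.fderiv_right (m := (⊤ : ℕ∞)) ((by simp))).differentiable (by simp)) p).hasFDerivAt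

/-- embedding y ↦ (y,t) -/
lemma hasFDerivAt_inx (t : ℝ) (x : V3) :
    HasFDerivAt (fun y : V3 => (y, t)) ((ContinuousLinearMap.id ℝ V3).prod 0) x :=
  (hasFDerivAt_id x).prodMk (hasFDerivAt_const t x)

lemma hasFDerivAt_int (x : V3) (t : ℝ) :
    HasFDerivAt (fun s : ℝ => (x, s)) ((0 : ℝ →L[ℝ] V3).prod (ContinuousLinearMap.id ℝ ℝ)) t :=
  (hasFDerivAt_const x t).prodMk (hasFDerivAt_id t)

/-- time derivative -/
lemma hasDerivAt_time (hf : SmoothS f) (x : V3) (t : ℝ) :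
    HasDerivAt (fun s => f x s) (fderiv ℝ (unc f) (x, t) (0, 1)) t := by
  have h := ((hasFDerivAt_unc hf (x, t)).comp t (hasFDerivAt_int x t)).hasDerivAt
  simp at h
  exact h

lemma hasFDerivAt_space (hf : SmoothS f) (x : V3) (t : ℝ) :
    HasFDerivAt (fun y => f y t)
      ((fderiv ℝ (unc f) (x, t)).comp ((ContinuousLinearMap.id ℝ V3).prod 0)) x :=
  ((hasFDerivAt_unc hf (x, t)).comp x (hasFDerivAt_inx t x) :)

lemma pd_eq (hf : SmoothS f) :
    pd i (fun y => f y t) x = fderiv ℝ (unc f) (x, t) (Pi.single i 1, 0) := by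
  rw [pd, (hasFDerivAt_space hf x t).fderiv]
  simp

/-- s ↦ fderiv (unc f) (x,s) v has derivative fderiv² (0,1) v -/
lemma hasDerivAt_fderiv_time (hf : SmoothS f) (v : V3 × ℝ) :
    HasDerivAt (fun s => fderiv ℝ (unc f) (x, s) v)
      (fderiv ℝ (fderiv ℝ (unc f)) (x, t) (0, 1) v) t := by
  have hc : HasFDerivAt (fun s : ℝ => fderiv ℝ (unc f) (x, s))
      ((fderiv ℝ (fderiv ℝ (unc f)) (x, t)).comp
        ((0 : ℝ →L[ℝ] V3).prod (ContinuousLinearMap.id ℝ ℝ))) t :=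
    (hasFDerivAt_fderiv_unc hf (x, t)).comp t (hasFDerivAt_int x t)
  have h := (hc.clm_apply (hasFDerivAt_const v t)).hasDerivAt
  simpa using h

lemma hasFDerivAt_fderiv_space (hf : SmoothS f) (v : V3 × ℝ) :
    HasFDerivAt (fun y => fderiv ℝ (unc f) (y, t) v)
      (((fderiv ℝ (fderiv ℝ (unc f)) (x, t)).comp
          ((ContinuousLinearMap.id ℝ V3).prod 0)).flip v) x := by
  have hc : HasFDerivAt (fun y : V3 => fderiv ℝ (unc f) (y, t))
      ((fderiv ℝ (fderiv ℝ (unc f)) (x, t)).comp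
        ((ContinuousLinearMap.id ℝ V3).prod 0)) x :=
    (hasFDerivAt_fderiv_unc hf (x, t)).comp x (hasFDerivAt_inx t x)
  have h := hc.clm_apply (hasFDerivAt_const v x)
  refine h.congr_fderiv ?_
  ext w
  simp

/-- the function y ↦ ∂ₜ f (y,t) rewritten -/
lemma dt_eq_fderiv (hf : SmoothS f) :
    (fun y => deriv (fun s => f y s) t) = fun y => fderiv ℝ (unc f) (y, t) (0, 1) :=
  funext fun y => (hasDerivAt_time hf y t).deriv

/-- key fact: HasFDerivAt for y ↦ ∂ₜ f (y, t) -/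
lemma hasFDerivAt_dt (hf : SmoothS f) :
    HasFDerivAt (fun y => deriv (fun s => f y s) t)
      (((fderiv ℝ (fderiv ℝ (unc f)) (x, t)).comp
          ((ContinuousLinearMap.id ℝ V3).prod 0)).flip (0, 1)) x := by
  rw [dt_eq_fderiv hf]
  exact hasFDerivAt_fderiv_space hf _

/-- s ↦ pd i f(·,s) x has derivative -/
lemma hasDerivAt_pd (hf : SmoothS f) :
    HasDerivAt (fun s => pd i (fun y => f y s) x)
      (fderiv ℝ (fderiv ℝ (unc f)) (x, t) (0, 1) (Pi.single i 1, 0)) t := by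
  have : (fun s => pd i (fun y => f y s) x)
      = fun s => fderiv ℝ (unc f) (x, s) (Pi.single i 1, 0) :=
    funext fun s => pd_eq hf
  rw [this]
  exact hasDerivAt_fderiv_time hf _

/-- s ↦ ∂ₜ f (x, s) has derivative (second time derivative exists) -/
lemma hasDerivAt_dt_time (hf : SmoothS f) :
    HasDerivAt (fun s => deriv (fun s' => f x s') s)
      (fderiv ℝ (fderiv ℝ (unc f)) (x, t) (0, 1) (0, 1)) t := by
  have : (fun s => deriv (fun s' => f x s') s)
      = fun s => fderiv ℝ (unc f) (x, s) (0, 1) :=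
    funext fun s => (hasDerivAt_time hf x s).deriv
  rw [this]
  exact hasDerivAt_fderiv_time hf _

/-- Clairaut: mixed partials commute -/
lemma pd_dt_comm (hf : SmoothS f) :
    pd i (fun y => deriv (fun s => f y s) t) x
      = deriv (fun s => pd i (fun y => f y s) x) t := by
  rw [pd, (hasFDerivAt_dt hf (x := x)).fderiv, (hasDerivAt_pd hf (i := i)).deriv]
  have hsymm := second_derivative_symmetric
    (fun y => hasFDerivAt_unc hf y) (hasFDerivAt_fderiv_unc hf (x, t))
    (Pi.single i 1, 0) (0, 1)
  simpa using hsymm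

end Stmt5Aux

namespace Stmt5Aux
open ContinuousLinearMap
variable {f : V3 → ℝ → ℝ} {x : V3} {t : ℝ} {i : Fin 3}

lemma deriv_time_eq (hf : SmoothS f) :
    deriv (fun s => f x s) t = fderiv ℝ (unc f) (x, t) (0, 1) :=
  (hasDerivAt_time hf x t).deriv

lemma deriv2_eq (hf : SmoothS f) :
    deriv (fun s => deriv (fun s' => f x s') s) t
      = fderiv ℝ (fderiv ℝ (unc f)) (x, t) (0, 1) (0, 1) :=
  (hasDerivAt_dt_time hf).deriv

lemma deriv_pd_eq (hf : SmoothS f) :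
    deriv (fun s => pd i (fun y => f y s) x) t
      = fderiv ℝ (fderiv ℝ (unc f)) (x, t) (0, 1) (Pi.single i 1, 0) :=
  (hasDerivAt_pd hf).deriv

lemma fderiv2_symm (hf : SmoothS f) (u v : V3 × ℝ) :
    fderiv ℝ (fderiv ℝ (unc f)) (x, t) u v
      = fderiv ℝ (fderiv ℝ (unc f)) (x, t) v u :=
  second_derivative_symmetric (fun y => hasFDerivAt_unc hf y)
    (hasFDerivAt_fderiv_unc hf (x, t)) u v

lemma pd_dt_eq (hf : SmoothS f) :
    pd i (fun y => deriv (fun s => f y s) t) x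
      = fderiv ℝ (fderiv ℝ (unc f)) (x, t) (0, 1) (Pi.single i 1, 0) := by
  rw [pd, (hasFDerivAt_dt hf (x := x)).fderiv]
  simp only [ContinuousLinearMap.flip_apply, ContinuousLinearMap.comp_apply,
    ContinuousLinearMap.prod_apply, ContinuousLinearMap.coe_id', id_eq,
    ContinuousLinearMap.zero_apply]
  exact fderiv2_symm hf _ _

section four
variable {a b c d e g h k : V3 → ℝ → ℝ}

lemma pd_four (ha : SmoothS a) (hb : SmoothS b) (hc : SmoothS c) (hd : SmoothS d)
    (he : SmoothS e) (hg : SmoothS g) (hh : SmoothS h) (hk : SmoothS k) :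
    pd i (fun y => (a y t * deriv (fun s => b y s) t - c y t * deriv (fun s => d y s) t)
        + (e y t * deriv (fun s => g y s) t - h y t * deriv (fun s => k y s) t)) x
    = (fderiv ℝ (unc a) (x, t) (Pi.single i 1, 0) * fderiv ℝ (unc b) (x, t) (0, 1)
        + a x t * fderiv ℝ (fderiv ℝ (unc b)) (x, t) (0, 1) (Pi.single i 1, 0)
      - (fderiv ℝ (unc c) (x, t) (Pi.single i 1, 0) * fderiv ℝ (unc d) (x, t) (0, 1)
        + c x t * fderiv ℝ (fderiv ℝ (unc d)) (x, t) (0, 1) (Pi.single i 1, 0)))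
      + (fderiv ℝ (unc e) (x, t) (Pi.single i 1, 0) * fderiv ℝ (unc g) (x, t) (0, 1)
        + e x t * fderiv ℝ (fderiv ℝ (unc g)) (x, t) (0, 1) (Pi.single i 1, 0)
      - (fderiv ℝ (unc h) (x, t) (Pi.single i 1, 0) * fderiv ℝ (unc k) (x, t) (0, 1)
        + h x t * fderiv ℝ (fderiv ℝ (unc k)) (x, t) (0, 1) (Pi.single i 1, 0))) := by
  have H : HasFDerivAt
      (fun y => (a y t * deriv (fun s => b y s) t - c y t * deriv (fun s => d y s) t)
        + (e y t * deriv (fun s => g y s) t - h y t * deriv (fun s => k y s) t)) _ x :=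
    (((hasFDerivAt_space ha x t).mul (hasFDerivAt_dt hb)).sub
      ((hasFDerivAt_space hc x t).mul (hasFDerivAt_dt hd))).add
    (((hasFDerivAt_space he x t).mul (hasFDerivAt_dt hg)).sub
      ((hasFDerivAt_space hh x t).mul (hasFDerivAt_dt hk)))
  rw [pd, H.fderiv]
  simp only [ContinuousLinearMap.add_apply, ContinuousLinearMap.sub_apply,
    ContinuousLinearMap.smul_apply, smul_eq_mul, ContinuousLinearMap.flip_apply,
    ContinuousLinearMap.comp_apply, ContinuousLinearMap.prod_apply,
    ContinuousLinearMap.coe_id', id_eq, ContinuousLinearMap.zero_apply]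
  rw [fderiv2_symm hb, fderiv2_symm hd, fderiv2_symm hg, fderiv2_symm hk,
    deriv_time_eq hb, deriv_time_eq hd, deriv_time_eq hg, deriv_time_eq hk]
  ring

end four

lemma diff_hyp {a b c : V3 → ℝ → ℝ} (ha : SmoothS a) (hb : SmoothS b) (hc : SmoothS c)
    (i j : Fin 3) (ε δ : ℝ) (x : V3) (t : ℝ)
    (h : ∀ s, pd i (fun y => a y s) x - pd j (fun y => b y s) x
        + ε * deriv (fun s' => c x s') s + δ * c x s = 0) :
    fderiv ℝ (fderiv ℝ (unc a)) (x, t) (0, 1) (Pi.single i 1, 0)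
      - fderiv ℝ (fderiv ℝ (unc b)) (x, t) (0, 1) (Pi.single j 1, 0)
      + ε * fderiv ℝ (fderiv ℝ (unc c)) (x, t) (0, 1) (0, 1)
      + δ * fderiv ℝ (unc c) (x, t) (0, 1) = 0 := by
  have H : HasDerivAt (fun s => pd i (fun y => a y s) x - pd j (fun y => b y s) x
        + ε * deriv (fun s' => c x s') s + δ * c x s)
      (fderiv ℝ (fderiv ℝ (unc a)) (x, t) (0, 1) (Pi.single i 1, 0)
        - fderiv ℝ (fderiv ℝ (unc b)) (x, t) (0, 1) (Pi.single j 1, 0)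
        + ε * fderiv ℝ (fderiv ℝ (unc c)) (x, t) (0, 1) (0, 1)
        + δ * fderiv ℝ (unc c) (x, t) (0, 1)) t :=
    (((hasDerivAt_pd ha).sub (hasDerivAt_pd hb)).add
      ((hasDerivAt_dt_time hc).const_mul ε)).add ((hasDerivAt_time hc x t).const_mul δ)
  have h0 := H.deriv
  rw [funext h, deriv_const] at h0
  exact h0.symm

end Stmt5Aux


namespace Stmt5Aux

lemma smoothS_comp {F : V3 → ℝ → V3} (hF : Smooth2 F) (i : Fin 3) :
    SmoothS (fun x t => F x t i) :=
  (ContinuousLinearMap.proj (R := ℝ) (φ := fun _ : Fin 3 => ℝ) i).contDiff.comp hF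

end Stmt5Aux

/-- the conservation law arising from time-translation invariance. -/
theorem stmt5 (σe σm : ℝ) (E B V W : V3 → ℝ → V3)
    (hE : Smooth2 E) (hB : Smooth2 B) (hV : Smooth2 V) (hW : Smooth2 W)
    (h1 : ∀ x t, curl3 (fun y => E y t) x + dt B x t + σm • B x t = 0)
    (h2 : ∀ x t, curl3 (fun y => B y t) x - dt E x t - σe • E x t = 0)
    (h3 : ∀ x t, curl3 (fun y => V y t) x + dt W x t - σe • W x t = 0)
    (h4 : ∀ x t, curl3 (fun y => W y t) x - dt V x t + σm • V x t = 0) :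
    ∀ x t,
      deriv (fun s => dot3 (dt E x s) (W x s) - dot3 (dt B x s) (V x s)) t
        + div3 (fun y => cross3 (V y t) (dt E y t) + cross3 (W y t) (dt B y t)) x
        = 0 := by
  intro x t
  have hE' := fun i => Stmt5Aux.smoothS_comp hE i
  have hB' := fun i => Stmt5Aux.smoothS_comp hB i
  have hV' := fun i => Stmt5Aux.smoothS_comp hV i
  have hW' := fun i => Stmt5Aux.smoothS_comp hW i
  have c10 : ∀ s, pd 1 (fun y => E y s 2) x - pd 2 (fun y => E y s 1) x
      + 1 * deriv (fun s' => B x s' 0) s + σm * B x s 0 = 0 := by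
    intro s
    have h := congrFun (h1 x s) 0
    simp only [curl3, dt, Pi.add_apply, Pi.sub_apply, Pi.smul_apply, Pi.zero_apply,
      smul_eq_mul, Matrix.cons_val_zero, Matrix.cons_val_one, Matrix.head_cons,
      Matrix.cons_val_two, Matrix.tail_cons, Fin.isValue] at h
    linear_combination h
  have c11 : ∀ s, pd 2 (fun y => E y s 0) x - pd 0 (fun y => E y s 2) x
      + 1 * deriv (fun s' => B x s' 1) s + σm * B x s 1 = 0 := by
    intro s
    have h := congrFun (h1 x s) 1
    simp only [curl3, dt, Pi.add_apply, Pi.sub_apply, Pi.smul_apply, Pi.zero_apply,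
      smul_eq_mul, Matrix.cons_val_zero, Matrix.cons_val_one, Matrix.head_cons,
      Matrix.cons_val_two, Matrix.tail_cons, Fin.isValue] at h
    linear_combination h
  have c12 : ∀ s, pd 0 (fun y => E y s 1) x - pd 1 (fun y => E y s 0) x
      + 1 * deriv (fun s' => B x s' 2) s + σm * B x s 2 = 0 := by
    intro s
    have h := congrFun (h1 x s) 2
    simp only [curl3, dt, Pi.add_apply, Pi.sub_apply, Pi.smul_apply, Pi.zero_apply,
      smul_eq_mul, Matrix.cons_val_zero, Matrix.cons_val_one, Matrix.head_cons,
      Matrix.cons_val_two, Matrix.tail_cons, Fin.isValue] at h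
    linear_combination h
  have c20 : ∀ s, pd 1 (fun y => B y s 2) x - pd 2 (fun y => B y s 1) x
      + (-1) * deriv (fun s' => E x s' 0) s + (-σe) * E x s 0 = 0 := by
    intro s
    have h := congrFun (h2 x s) 0
    simp only [curl3, dt, Pi.add_apply, Pi.sub_apply, Pi.smul_apply, Pi.zero_apply,
      smul_eq_mul, Matrix.cons_val_zero, Matrix.cons_val_one, Matrix.head_cons,
      Matrix.cons_val_two, Matrix.tail_cons, Fin.isValue] at h
    linear_combination h
  have c21 : ∀ s, pd 2 (fun y => B y s 0) x - pd 0 (fun y => B y s 2) x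
      + (-1) * deriv (fun s' => E x s' 1) s + (-σe) * E x s 1 = 0 := by
    intro s
    have h := congrFun (h2 x s) 1
    simp only [curl3, dt, Pi.add_apply, Pi.sub_apply, Pi.smul_apply, Pi.zero_apply,
      smul_eq_mul, Matrix.cons_val_zero, Matrix.cons_val_one, Matrix.head_cons,
      Matrix.cons_val_two, Matrix.tail_cons, Fin.isValue] at h
    linear_combination h
  have c22 : ∀ s, pd 0 (fun y => B y s 1) x - pd 1 (fun y => B y s 0) x
      + (-1) * deriv (fun s' => E x s' 2) s + (-σe) * E x s 2 = 0 := by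
    intro s
    have h := congrFun (h2 x s) 2
    simp only [curl3, dt, Pi.add_apply, Pi.sub_apply, Pi.smul_apply, Pi.zero_apply,
      smul_eq_mul, Matrix.cons_val_zero, Matrix.cons_val_one, Matrix.head_cons,
      Matrix.cons_val_two, Matrix.tail_cons, Fin.isValue] at h
    linear_combination h
  have c30 : ∀ s, pd 1 (fun y => V y s 2) x - pd 2 (fun y => V y s 1) x
      + 1 * deriv (fun s' => W x s' 0) s + (-σe) * W x s 0 = 0 := by
    intro s
    have h := congrFun (h3 x s) 0
    simp only [curl3, dt, Pi.add_apply, Pi.sub_apply, Pi.smul_apply, Pi.zero_apply,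
      smul_eq_mul, Matrix.cons_val_zero, Matrix.cons_val_one, Matrix.head_cons,
      Matrix.cons_val_two, Matrix.tail_cons, Fin.isValue] at h
    linear_combination h
  have c31 : ∀ s, pd 2 (fun y => V y s 0) x - pd 0 (fun y => V y s 2) x
      + 1 * deriv (fun s' => W x s' 1) s + (-σe) * W x s 1 = 0 := by
    intro s
    have h := congrFun (h3 x s) 1
    simp only [curl3, dt, Pi.add_apply, Pi.sub_apply, Pi.smul_apply, Pi.zero_apply,
      smul_eq_mul, Matrix.cons_val_zero, Matrix.cons_val_one, Matrix.head_cons,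
      Matrix.cons_val_two, Matrix.tail_cons, Fin.isValue] at h
    linear_combination h
  have c32 : ∀ s, pd 0 (fun y => V y s 1) x - pd 1 (fun y => V y s 0) x
      + 1 * deriv (fun s' => W x s' 2) s + (-σe) * W x s 2 = 0 := by
    intro s
    have h := congrFun (h3 x s) 2
    simp only [curl3, dt, Pi.add_apply, Pi.sub_apply, Pi.smul_apply, Pi.zero_apply,
      smul_eq_mul, Matrix.cons_val_zero, Matrix.cons_val_one, Matrix.head_cons,
      Matrix.cons_val_two, Matrix.tail_cons, Fin.isValue] at h
    linear_combination h
  have c40 : ∀ s, pd 1 (fun y => W y s 2) x - pd 2 (fun y => W y s 1) x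
      + (-1) * deriv (fun s' => V x s' 0) s + σm * V x s 0 = 0 := by
    intro s
    have h := congrFun (h4 x s) 0
    simp only [curl3, dt, Pi.add_apply, Pi.sub_apply, Pi.smul_apply, Pi.zero_apply,
      smul_eq_mul, Matrix.cons_val_zero, Matrix.cons_val_one, Matrix.head_cons,
      Matrix.cons_val_two, Matrix.tail_cons, Fin.isValue] at h
    linear_combination h
  have c41 : ∀ s, pd 2 (fun y => W y s 0) x - pd 0 (fun y => W y s 2) x
      + (-1) * deriv (fun s' => V x s' 1) s + σm * V x s 1 = 0 := by
    intro s
    have h := congrFun (h4 x s) 1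
    simp only [curl3, dt, Pi.add_apply, Pi.sub_apply, Pi.smul_apply, Pi.zero_apply,
      smul_eq_mul, Matrix.cons_val_zero, Matrix.cons_val_one, Matrix.head_cons,
      Matrix.cons_val_two, Matrix.tail_cons, Fin.isValue] at h
    linear_combination h
  have c42 : ∀ s, pd 0 (fun y => W y s 1) x - pd 1 (fun y => W y s 0) x
      + (-1) * deriv (fun s' => V x s' 2) s + σm * V x s 2 = 0 := by
    intro s
    have h := congrFun (h4 x s) 2
    simp only [curl3, dt, Pi.add_apply, Pi.sub_apply, Pi.smul_apply, Pi.zero_apply,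
      smul_eq_mul, Matrix.cons_val_zero, Matrix.cons_val_one, Matrix.head_cons,
      Matrix.cons_val_two, Matrix.tail_cons, Fin.isValue] at h
    linear_combination h
  have dc10 := Stmt5Aux.diff_hyp (hE' 2) (hE' 1) (hB' 0) 1 2 1 σm x t c10
  have dc11 := Stmt5Aux.diff_hyp (hE' 0) (hE' 2) (hB' 1) 2 0 1 σm x t c11
  have dc12 := Stmt5Aux.diff_hyp (hE' 1) (hE' 0) (hB' 2) 0 1 1 σm x t c12
  have dc20 := Stmt5Aux.diff_hyp (hB' 2) (hB' 1) (hE' 0) 1 2 (-1) (-σe) x t c20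
  have dc21 := Stmt5Aux.diff_hyp (hB' 0) (hB' 2) (hE' 1) 2 0 (-1) (-σe) x t c21
  have dc22 := Stmt5Aux.diff_hyp (hB' 1) (hB' 0) (hE' 2) 0 1 (-1) (-σe) x t c22
  have c30t := c30 t
  have c31t := c31 t
  have c32t := c32 t
  have c40t := c40 t
  have c41t := c41 t
  have c42t := c42 t
  simp only [dot3, dt, div3, cross3, Pi.add_apply, Matrix.cons_val_zero,
    Matrix.cons_val_one, Matrix.head_cons, Matrix.cons_val_two, Matrix.tail_cons,
    Fin.isValue]
  have HD : HasDerivAt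
      (fun s => (deriv (fun s' => E x s' 0) s * W x s 0 + deriv (fun s' => E x s' 1) s * W x s 1 + deriv (fun s' => E x s' 2) s * W x s 2) - (deriv (fun s' => B x s' 0) s * V x s 0 + deriv (fun s' => B x s' 1) s * V x s 1 + deriv (fun s' => B x s' 2) s * V x s 2))
      (((fderiv ℝ (fderiv ℝ (Stmt5Aux.unc fun a b => E a b 0)) (x, t) (0, 1) (0, 1) * W x t 0 + deriv (fun s => E x s 0) t * fderiv ℝ (Stmt5Aux.unc fun a b => W a b 0) (x, t) (0, 1)) + (fderiv ℝ (fderiv ℝ (Stmt5Aux.unc fun a b => E a b 1)) (x, t) (0, 1) (0, 1) * W x t 1 + deriv (fun s => E x s 1) t * fderiv ℝ (Stmt5Aux.unc fun a b => W a b 1) (x, t) (0, 1)) + (fderiv ℝ (fderiv ℝ (Stmt5Aux.unc fun a b => E a b 2)) (x, t) (0, 1) (0, 1) * W x t 2 + deriv (fun s => E x s 2) t * fderiv ℝ (Stmt5Aux.unc fun a b => W a b 2) (x, t) (0, 1))) - ((fderiv ℝ (fderiv ℝ (Stmt5Aux.unc fun a b => B a b 0)) (x, t) (0, 1) (0, 1)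 * V x t 0 + deriv (fun s => B x s 0) t * fderiv ℝ (Stmt5Aux.unc fun a b => V a b 0) (x, t) (0, 1)) + (fderiv ℝ (fderiv ℝ (Stmt5Aux.unc fun a b => B a b 1)) (x, t) (0, 1) (0, 1) * V x t 1 + deriv (fun s => B x s 1) t * fderiv ℝ (Stmt5Aux.unc fun a b => V a b 1) (x, t) (0, 1)) + (fderiv ℝ (fderiv ℝ (Stmt5Aux.unc fun a b => B a b 2)) (x, t) (0, 1) (0, 1) * V x t 2 + deriv (fun s => B x s 2) t * fderiv ℝ (Stmt5Aux.unc fun a b => V a b 2) (x, t) (0, 1)))) t := ((((Stmt5Aux.hasDerivAt_dt_time (hE' 0)).mul (Stmt5Aux.hasDerivAt_time (hW' 0) x t)).add ((Stmt5Aux.hasDerivAt_dt_time (hE' 1)).mul (Stmt5Aux.hasDerivAt_time (hW' 1) x t))).add ((Stmt5Aux.hasDerivAt_dt_time (hE' 2)).mul (Stmt5Aux.hasDerivAt_time (hW' 2) x t))).sub ((((Stmt5Aux.hasDerivAt_dt_time (hB' 0)).mul (Stmt5Aux.hasDerivAt_time (hV' 0) x t)).add ((Stmt5Aux.hasDerivAt_dt_time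 (hB' 1)).mul (Stmt5Aux.hasDerivAt_time (hV' 1) x t))).add ((Stmt5Aux.hasDerivAt_dt_time (hB' 2)).mul (Stmt5Aux.hasDerivAt_time (hV' 2) x t)))
  rw [HD.deriv]
  rw [Stmt5Aux.pd_four (hV' 1) (hE' 2) (hV' 2) (hE' 1) (hW' 1) (hB' 2) (hW' 2) (hB' 1)]
  rw [Stmt5Aux.pd_four (hV' 2) (hE' 0) (hV' 0) (hE' 2) (hW' 2) (hB' 0) (hW' 0) (hB' 2)]
  rw [Stmt5Aux.pd_four (hV' 0) (hE' 1) (hV' 1) (hE' 0) (hW' 0) (hB' 1) (hW' 1) (hB' 0)]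
  simp only [Stmt5Aux.deriv_time_eq (hE' 0),
    Stmt5Aux.deriv_time_eq (hE' 1),
    Stmt5Aux.deriv_time_eq (hE' 2),
    Stmt5Aux.deriv_time_eq (hB' 0),
    Stmt5Aux.deriv_time_eq (hB' 1),
    Stmt5Aux.deriv_time_eq (hB' 2),
    Stmt5Aux.deriv_time_eq (hV' 0),
    Stmt5Aux.deriv_time_eq (hV' 1),
    Stmt5Aux.deriv_time_eq (hV' 2),
    Stmt5Aux.deriv_time_eq (hW' 0),
    Stmt5Aux.deriv_time_eq (hW' 1),
    Stmt5Aux.deriv_time_eq (hW' 2),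
    Stmt5Aux.pd_eq (hV' 0),
    Stmt5Aux.pd_eq (hV' 1),
    Stmt5Aux.pd_eq (hV' 2),
    Stmt5Aux.pd_eq (hW' 0),
    Stmt5Aux.pd_eq (hW' 1),
    Stmt5Aux.pd_eq (hW' 2)] at c30t c31t c32t c40t c41t c42t ⊢
  linear_combination
    (fderiv ℝ (Stmt5Aux.unc fun a b => E a b 0) (x, t) (0, 1)) * c30t
    + (fderiv ℝ (Stmt5Aux.unc fun a b => E a b 1) (x, t) (0, 1)) * c31t
    + (fderiv ℝ (Stmt5Aux.unc fun a b => E a b 2) (x, t) (0, 1)) * c32t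
    + (fderiv ℝ (Stmt5Aux.unc fun a b => B a b 0) (x, t) (0, 1)) * c40t
    + (fderiv ℝ (Stmt5Aux.unc fun a b => B a b 1) (x, t) (0, 1)) * c41t
    + (fderiv ℝ (Stmt5Aux.unc fun a b => B a b 2) (x, t) (0, 1)) * c42t
    + (- (V x t 0)) * dc10
    + (- (V x t 1)) * dc11
    + (- (V x t 2)) * dc12
    + (- (W x t 0)) * dc20
    + (- (W x t 1)) * dc21
    + (- (W x t 2)) * dc22
end
end

section
/- Let E, B, V, W be smooth vector fields on ℝ³ × ℝ satisfying curl E + ∂B/∂t + σₘ B = 0, curl B − ∂E/∂t − σₑ E = 0, curl V + ∂W/∂t − σₑ W = 0, and curl W − ∂V/∂t + σₘ V = 0. Define τ = (∂E/∂x)·W − (∂B/∂x)·V and χ = V × (∂E/∂x) + W × (∂B/∂x). Then ∂τ/∂t + div χ = 0. -/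
noncomputable section

/-- componentwise spatial partial derivative of a time-dependent vector field -/
def pdv (i : Fin 3) (F : V3 → ℝ → V3) (x : V3) (t : ℝ) : V3 :=
  fun k => pd i (fun y => F y t k) x

abbrev PP : Type := V3 × ℝ
def uvec (i : Fin 3) : PP := (Pi.single i 1, 0)
def tvec : PP := (0, 1)
def DD (u : PP) (f : PP → ℝ) (p : PP) : ℝ := fderiv ℝ f p u

lemma contDiff_DD {f : PP → ℝ} (hf : ContDiff ℝ (⊤ : ℕ∞) f) (u : PP) : ContDiff ℝ (⊤ : ℕ∞) (DD u f) := by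
  have h := hf.fderiv_right (m := (⊤ : ℕ∞)) (by simp)
  exact h.clm_apply contDiff_const

lemma DD_comm {f : PP → ℝ} (hf : ContDiff ℝ (⊤ : ℕ∞) f) (u v : PP) (p : PP) :
    DD u (DD v f) p = DD v (DD u f) p := by
  have h2 : ContDiffAt ℝ 2 f p := (hf.of_le (WithTop.coe_le_coe.mpr le_top)).contDiffAt
  have hs : IsSymmSndFDerivAt ℝ f p := h2.isSymmSndFDerivAt (by norm_num)
  have hd : DifferentiableAt ℝ (fderiv ℝ f) p :=
    ((hf.fderiv_right (m := (⊤ : ℕ∞)) (by simp)).differentiable (by simp)).differentiableAt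
  have key : ∀ w y : PP, DD w (DD y f) p = fderiv ℝ (fderiv ℝ f) p w y := by
    intro w y
    show fderiv ℝ (fun q => (fderiv ℝ f q) y) p w = _
    rw [fderiv_clm_apply hd (differentiableAt_const y)]
    simp
  rw [key u v, key v u, hs u v]

lemma pd_eq_DD (g : V3 → ℝ → ℝ) (hg : Differentiable ℝ fun q : PP => g q.1 q.2)
    (i : Fin 3) (x : V3) (t : ℝ) :
    pd i (fun y => g y t) x = DD (uvec i) (fun q : PP => g q.1 q.2) (x, t) := by
  have hline : HasFDerivAt (fun y : V3 => ((y, t) : PP))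
      ((ContinuousLinearMap.id ℝ V3).prod 0) x :=
    (hasFDerivAt_id x).prodMk (hasFDerivAt_const t x)
  have hcomp : HasFDerivAt (fun y : V3 => g y t)
      ((fderiv ℝ (fun q : PP => g q.1 q.2) (x, t)).comp
        ((ContinuousLinearMap.id ℝ V3).prod 0)) x :=
    (hg.differentiableAt.hasFDerivAt).comp x hline
  show fderiv ℝ (fun y => g y t) x (Pi.single i 1) = _
  rw [hcomp.fderiv]
  rfl

lemma deriv_eq_DD (g : V3 → ℝ → ℝ) (hg : Differentiable ℝ fun q : PP => g q.1 q.2)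
    (x : V3) (t : ℝ) :
    deriv (fun s => g x s) t = DD tvec (fun q : PP => g q.1 q.2) (x, t) := by
  have hline : HasDerivAt (fun s : ℝ => ((x, s) : PP)) ((0, 1) : PP) t :=
    (hasDerivAt_const t x).prodMk (hasDerivAt_id t)
  have hcomp : HasDerivAt (fun s => g x s)
      (fderiv ℝ (fun q : PP => g q.1 q.2) (x, t) ((0,1) : PP)) t :=
    (hg.differentiableAt.hasFDerivAt).comp_hasDerivAt t hline
  rw [hcomp.deriv]; rfl

lemma DD_zero (u p) : DD u (fun _ : PP => (0:ℝ)) p = 0 := by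
  unfold DD; rw [fderiv_fun_const]; rfl

lemma DD_addX {f g : PP → ℝ} (u p) (hf : Differentiable ℝ f := by fun_prop)
    (hg : Differentiable ℝ g := by fun_prop) :
    DD u (fun q => f q + g q) p = DD u f p + DD u g p := by
  unfold DD; rw [fderiv_fun_add hf.differentiableAt hg.differentiableAt]; rfl

lemma DD_subX {f g : PP → ℝ} (u p) (hf : Differentiable ℝ f := by fun_prop)
    (hg : Differentiable ℝ g := by fun_prop) :
    DD u (fun q => f q - g q) p = DD u f p - DD u g p := by
  unfold DD; rw [fderiv_fun_sub hf.differentiableAt hg.differentiableAt]; rfl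

lemma DD_mulX {f g : PP → ℝ} (u p) (hf : Differentiable ℝ f := by fun_prop)
    (hg : Differentiable ℝ g := by fun_prop) :
    DD u (fun q => f q * g q) p = DD u f p * g p + f p * DD u g p := by
  unfold DD; rw [fderiv_fun_mul hf.differentiableAt hg.differentiableAt]
  simp only [ContinuousLinearMap.add_apply, ContinuousLinearMap.smul_apply, smul_eq_mul]; ring

lemma DD_const_mulX {f : PP → ℝ} (u p) (c : ℝ) (hf : Differentiable ℝ f := by fun_prop) :
    DD u (fun q => c * f q) p = c * DD u f p := by
  unfold DD; rw [fderiv_const_mul hf.differentiableAt]; rfl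

/-- the conservation law arising from x-translation invariance. -/
theorem stmt6 (σe σm : ℝ) (E B V W : V3 → ℝ → V3)
    (hE : Smooth2 E) (hB : Smooth2 B) (hV : Smooth2 V) (hW : Smooth2 W)
    (h1 : ∀ x t, curl3 (fun y => E y t) x + dt B x t + σm • B x t = 0)
    (h2 : ∀ x t, curl3 (fun y => B y t) x - dt E x t - σe • E x t = 0)
    (h3 : ∀ x t, curl3 (fun y => V y t) x + dt W x t - σe • W x t = 0)
    (h4 : ∀ x t, curl3 (fun y => W y t) x - dt V x t + σm • V x t = 0) :
    ∀ x t,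
      deriv (fun s => dot3 (pdv 0 E x s) (W x s) - dot3 (pdv 0 B x s) (V x s)) t
        + div3 (fun y => cross3 (V y t) (pdv 0 E y t) + cross3 (W y t) (pdv 0 B y t)) x
        = 0 := by
  intro x t
  have sE : ∀ k : Fin 3, ContDiff ℝ (⊤ : ℕ∞) (fun q : PP => E q.1 q.2 k) := fun k => contDiff_pi.mp hE k
  have sB : ∀ k : Fin 3, ContDiff ℝ (⊤ : ℕ∞) (fun q : PP => B q.1 q.2 k) := fun k => contDiff_pi.mp hB k
  have sV : ∀ k : Fin 3, ContDiff ℝ (⊤ : ℕ∞) (fun q : PP => V q.1 q.2 k) := fun k => contDiff_pi.mp hV k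
  have sW : ∀ k : Fin 3, ContDiff ℝ (⊤ : ℕ∞) (fun q : PP => W q.1 q.2 k) := fun k => contDiff_pi.mp hW k
  have dE : ∀ k : Fin 3, Differentiable ℝ (fun q : PP => E q.1 q.2 k) := fun k => (sE k).differentiable (by simp)
  have dB : ∀ k : Fin 3, Differentiable ℝ (fun q : PP => B q.1 q.2 k) := fun k => (sB k).differentiable (by simp)
  have dV : ∀ k : Fin 3, Differentiable ℝ (fun q : PP => V q.1 q.2 k) := fun k => (sV k).differentiable (by simp)
  have dW : ∀ k : Fin 3, Differentiable ℝ (fun q : PP => W q.1 q.2 k) := fun k => (sW k).differentiable (by simp)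
  have dDE : ∀ (u : PP) (k : Fin 3), Differentiable ℝ (DD u (fun q : PP => E q.1 q.2 k)) := fun u k => (contDiff_DD (sE k) u).differentiable (by simp)
  have dDB : ∀ (u : PP) (k : Fin 3), Differentiable ℝ (DD u (fun q : PP => B q.1 q.2 k)) := fun u k => (contDiff_DD (sB k) u).differentiable (by simp)
  have dDV : ∀ (u : PP) (k : Fin 3), Differentiable ℝ (DD u (fun q : PP => V q.1 q.2 k)) := fun u k => (contDiff_DD (sV k) u).differentiable (by simp)
  have dDW : ∀ (u : PP) (k : Fin 3), Differentiable ℝ (DD u (fun q : PP => W q.1 q.2 k)) := fun u k => (contDiff_DD (sW k) u).differentiable (by simp)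
  have e1_0 : ∀ q : PP, DD (uvec 1) (fun q : PP => E q.1 q.2 2) q - DD (uvec 2) (fun q : PP => E q.1 q.2 1) q + DD tvec (fun q : PP => B q.1 q.2 0) q + σm * B q.1 q.2 0 = 0 := by
    rintro ⟨y, s⟩
    have h := congrFun (h1 y s) 0
    simp only [curl3, dt, Pi.add_apply, Pi.sub_apply, Pi.smul_apply, Pi.zero_apply,
      smul_eq_mul, Fin.isValue, Matrix.cons_val_zero, Matrix.cons_val_one,
      Matrix.cons_val_two, Matrix.head_cons, Matrix.tail_cons] at h
    rw [pd_eq_DD (fun z r => E z r 2) (dE 2) 1 y s,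
        pd_eq_DD (fun z r => E z r 1) (dE 1) 2 y s,
        deriv_eq_DD (fun z r => B z r 0) (dB 0) y s] at h
    linear_combination h
  have e1_1 : ∀ q : PP, DD (uvec 2) (fun q : PP => E q.1 q.2 0) q - DD (uvec 0) (fun q : PP => E q.1 q.2 2) q + DD tvec (fun q : PP => B q.1 q.2 1) q + σm * B q.1 q.2 1 = 0 := by
    rintro ⟨y, s⟩
    have h := congrFun (h1 y s) 1
    simp only [curl3, dt, Pi.add_apply, Pi.sub_apply, Pi.smul_apply, Pi.zero_apply,
      smul_eq_mul, Fin.isValue, Matrix.cons_val_zero, Matrix.cons_val_one,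
      Matrix.cons_val_two, Matrix.head_cons, Matrix.tail_cons] at h
    rw [pd_eq_DD (fun z r => E z r 0) (dE 0) 2 y s,
        pd_eq_DD (fun z r => E z r 2) (dE 2) 0 y s,
        deriv_eq_DD (fun z r => B z r 1) (dB 1) y s] at h
    linear_combination h
  have e1_2 : ∀ q : PP, DD (uvec 0) (fun q : PP => E q.1 q.2 1) q - DD (uvec 1) (fun q : PP => E q.1 q.2 0) q + DD tvec (fun q : PP => B q.1 q.2 2) q + σm * B q.1 q.2 2 = 0 := by
    rintro ⟨y, s⟩
    have h := congrFun (h1 y s) 2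
    simp only [curl3, dt, Pi.add_apply, Pi.sub_apply, Pi.smul_apply, Pi.zero_apply,
      smul_eq_mul, Fin.isValue, Matrix.cons_val_zero, Matrix.cons_val_one,
      Matrix.cons_val_two, Matrix.head_cons, Matrix.tail_cons] at h
    rw [pd_eq_DD (fun z r => E z r 1) (dE 1) 0 y s,
        pd_eq_DD (fun z r => E z r 0) (dE 0) 1 y s,
        deriv_eq_DD (fun z r => B z r 2) (dB 2) y s] at h
    linear_combination h
  have e2_0 : ∀ q : PP, DD (uvec 1) (fun q : PP => B q.1 q.2 2) q - DD (uvec 2) (fun q : PP => B q.1 q.2 1) q - DD tvec (fun q : PP => E q.1 q.2 0) q - σe * E q.1 q.2 0 = 0 := by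
    rintro ⟨y, s⟩
    have h := congrFun (h2 y s) 0
    simp only [curl3, dt, Pi.add_apply, Pi.sub_apply, Pi.smul_apply, Pi.zero_apply,
      smul_eq_mul, Fin.isValue, Matrix.cons_val_zero, Matrix.cons_val_one,
      Matrix.cons_val_two, Matrix.head_cons, Matrix.tail_cons] at h
    rw [pd_eq_DD (fun z r => B z r 2) (dB 2) 1 y s,
        pd_eq_DD (fun z r => B z r 1) (dB 1) 2 y s,
        deriv_eq_DD (fun z r => E z r 0) (dE 0) y s] at h
    linear_combination h
  have e2_1 : ∀ q : PP, DD (uvec 2) (fun q : PP => B q.1 q.2 0) q - DD (uvec 0) (fun q : PP => B q.1 q.2 2) q - DD tvec (fun q : PP => E q.1 q.2 1) q - σe * E q.1 q.2 1 = 0 := by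
    rintro ⟨y, s⟩
    have h := congrFun (h2 y s) 1
    simp only [curl3, dt, Pi.add_apply, Pi.sub_apply, Pi.smul_apply, Pi.zero_apply,
      smul_eq_mul, Fin.isValue, Matrix.cons_val_zero, Matrix.cons_val_one,
      Matrix.cons_val_two, Matrix.head_cons, Matrix.tail_cons] at h
    rw [pd_eq_DD (fun z r => B z r 0) (dB 0) 2 y s,
        pd_eq_DD (fun z r => B z r 2) (dB 2) 0 y s,
        deriv_eq_DD (fun z r => E z r 1) (dE 1) y s] at h
    linear_combination h
  have e2_2 : ∀ q : PP, DD (uvec 0) (fun q : PP => B q.1 q.2 1) q - DD (uvec 1) (fun q : PP => B q.1 q.2 0) q - DD tvec (fun q : PP => E q.1 q.2 2) q - σe * E q.1 q.2 2 = 0 := by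
    rintro ⟨y, s⟩
    have h := congrFun (h2 y s) 2
    simp only [curl3, dt, Pi.add_apply, Pi.sub_apply, Pi.smul_apply, Pi.zero_apply,
      smul_eq_mul, Fin.isValue, Matrix.cons_val_zero, Matrix.cons_val_one,
      Matrix.cons_val_two, Matrix.head_cons, Matrix.tail_cons] at h
    rw [pd_eq_DD (fun z r => B z r 1) (dB 1) 0 y s,
        pd_eq_DD (fun z r => B z r 0) (dB 0) 1 y s,
        deriv_eq_DD (fun z r => E z r 2) (dE 2) y s] at h
    linear_combination h
  have e3_0 : ∀ q : PP, DD (uvec 1) (fun q : PP => V q.1 q.2 2) q - DD (uvec 2) (fun q : PP => V q.1 q.2 1) q + DD tvec (fun q : PP => W q.1 q.2 0) q - σe * W q.1 q.2 0 = 0 := by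
    rintro ⟨y, s⟩
    have h := congrFun (h3 y s) 0
    simp only [curl3, dt, Pi.add_apply, Pi.sub_apply, Pi.smul_apply, Pi.zero_apply,
      smul_eq_mul, Fin.isValue, Matrix.cons_val_zero, Matrix.cons_val_one,
      Matrix.cons_val_two, Matrix.head_cons, Matrix.tail_cons] at h
    rw [pd_eq_DD (fun z r => V z r 2) (dV 2) 1 y s,
        pd_eq_DD (fun z r => V z r 1) (dV 1) 2 y s,
        deriv_eq_DD (fun z r => W z r 0) (dW 0) y s] at h
    linear_combination h
  have e3_1 : ∀ q : PP, DD (uvec 2) (fun q : PP => V q.1 q.2 0) q - DD (uvec 0) (fun q : PP => V q.1 q.2 2) q + DD tvec (fun q : PP => W q.1 q.2 1) q - σe * W q.1 q.2 1 = 0 := by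
    rintro ⟨y, s⟩
    have h := congrFun (h3 y s) 1
    simp only [curl3, dt, Pi.add_apply, Pi.sub_apply, Pi.smul_apply, Pi.zero_apply,
      smul_eq_mul, Fin.isValue, Matrix.cons_val_zero, Matrix.cons_val_one,
      Matrix.cons_val_two, Matrix.head_cons, Matrix.tail_cons] at h
    rw [pd_eq_DD (fun z r => V z r 0) (dV 0) 2 y s,
        pd_eq_DD (fun z r => V z r 2) (dV 2) 0 y s,
        deriv_eq_DD (fun z r => W z r 1) (dW 1) y s] at h
    linear_combination h
  have e3_2 : ∀ q : PP, DD (uvec 0) (fun q : PP => V q.1 q.2 1) q - DD (uvec 1) (fun q : PP => V q.1 q.2 0) q + DD tvec (fun q : PP => W q.1 q.2 2) q - σe * W q.1 q.2 2 = 0 := by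
    rintro ⟨y, s⟩
    have h := congrFun (h3 y s) 2
    simp only [curl3, dt, Pi.add_apply, Pi.sub_apply, Pi.smul_apply, Pi.zero_apply,
      smul_eq_mul, Fin.isValue, Matrix.cons_val_zero, Matrix.cons_val_one,
      Matrix.cons_val_two, Matrix.head_cons, Matrix.tail_cons] at h
    rw [pd_eq_DD (fun z r => V z r 1) (dV 1) 0 y s,
        pd_eq_DD (fun z r => V z r 0) (dV 0) 1 y s,
        deriv_eq_DD (fun z r => W z r 2) (dW 2) y s] at h
    linear_combination h
  have e4_0 : ∀ q : PP, DD (uvec 1) (fun q : PP => W q.1 q.2 2) q - DD (uvec 2) (fun q : PP => W q.1 q.2 1) q - DD tvec (fun q : PP => V q.1 q.2 0) q + σm * V q.1 q.2 0 = 0 := by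
    rintro ⟨y, s⟩
    have h := congrFun (h4 y s) 0
    simp only [curl3, dt, Pi.add_apply, Pi.sub_apply, Pi.smul_apply, Pi.zero_apply,
      smul_eq_mul, Fin.isValue, Matrix.cons_val_zero, Matrix.cons_val_one,
      Matrix.cons_val_two, Matrix.head_cons, Matrix.tail_cons] at h
    rw [pd_eq_DD (fun z r => W z r 2) (dW 2) 1 y s,
        pd_eq_DD (fun z r => W z r 1) (dW 1) 2 y s,
        deriv_eq_DD (fun z r => V z r 0) (dV 0) y s] at h
    linear_combination h
  have e4_1 : ∀ q : PP, DD (uvec 2) (fun q : PP => W q.1 q.2 0) q - DD (uvec 0) (fun q : PP => W q.1 q.2 2) q - DD tvec (fun q : PP => V q.1 q.2 1) q + σm * V q.1 q.2 1 = 0 := by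
    rintro ⟨y, s⟩
    have h := congrFun (h4 y s) 1
    simp only [curl3, dt, Pi.add_apply, Pi.sub_apply, Pi.smul_apply, Pi.zero_apply,
      smul_eq_mul, Fin.isValue, Matrix.cons_val_zero, Matrix.cons_val_one,
      Matrix.cons_val_two, Matrix.head_cons, Matrix.tail_cons] at h
    rw [pd_eq_DD (fun z r => W z r 0) (dW 0) 2 y s,
        pd_eq_DD (fun z r => W z r 2) (dW 2) 0 y s,
        deriv_eq_DD (fun z r => V z r 1) (dV 1) y s] at h
    linear_combination h
  have e4_2 : ∀ q : PP, DD (uvec 0) (fun q : PP => W q.1 q.2 1) q - DD (uvec 1) (fun q : PP => W q.1 q.2 0) q - DD tvec (fun q : PP => V q.1 q.2 2) q + σm * V q.1 q.2 2 = 0 := by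
    rintro ⟨y, s⟩
    have h := congrFun (h4 y s) 2
    simp only [curl3, dt, Pi.add_apply, Pi.sub_apply, Pi.smul_apply, Pi.zero_apply,
      smul_eq_mul, Fin.isValue, Matrix.cons_val_zero, Matrix.cons_val_one,
      Matrix.cons_val_two, Matrix.head_cons, Matrix.tail_cons] at h
    rw [pd_eq_DD (fun z r => W z r 1) (dW 1) 0 y s,
        pd_eq_DD (fun z r => W z r 0) (dW 0) 1 y s,
        deriv_eq_DD (fun z r => V z r 2) (dV 2) y s] at h
    linear_combination h
  have d1_0 : DD (uvec 0) (fun q : PP => DD (uvec 1) (fun q : PP => E q.1 q.2 2) q - DD (uvec 2) (fun q : PP => E q.1 q.2 1) q + DD tvec (fun q : PP => B q.1 q.2 0) q + σm * B q.1 q.2 0) (x, t) = 0 := by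
    rw [show (fun q : PP => DD (uvec 1) (fun q : PP => E q.1 q.2 2) q - DD (uvec 2) (fun q : PP => E q.1 q.2 1) q + DD tvec (fun q : PP => B q.1 q.2 0) q + σm * B q.1 q.2 0) = (fun _ : PP => (0:ℝ)) from funext e1_0, DD_zero]
  repeat first
  | rw [DD_const_mulX] at d1_0
  | rw [DD_addX] at d1_0
  | rw [DD_subX] at d1_0
  | rw [DD_mulX] at d1_0
  have d1_1 : DD (uvec 0) (fun q : PP => DD (uvec 2) (fun q : PP => E q.1 q.2 0) q - DD (uvec 0) (fun q : PP => E q.1 q.2 2) q + DD tvec (fun q : PP => B q.1 q.2 1) q + σm * B q.1 q.2 1) (x, t) = 0 := by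
    rw [show (fun q : PP => DD (uvec 2) (fun q : PP => E q.1 q.2 0) q - DD (uvec 0) (fun q : PP => E q.1 q.2 2) q + DD tvec (fun q : PP => B q.1 q.2 1) q + σm * B q.1 q.2 1) = (fun _ : PP => (0:ℝ)) from funext e1_1, DD_zero]
  repeat first
  | rw [DD_const_mulX] at d1_1
  | rw [DD_addX] at d1_1
  | rw [DD_subX] at d1_1
  | rw [DD_mulX] at d1_1
  have d1_2 : DD (uvec 0) (fun q : PP => DD (uvec 0) (fun q : PP => E q.1 q.2 1) q - DD (uvec 1) (fun q : PP => E q.1 q.2 0) q + DD tvec (fun q : PP => B q.1 q.2 2) q + σm * B q.1 q.2 2) (x, t) = 0 := by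
    rw [show (fun q : PP => DD (uvec 0) (fun q : PP => E q.1 q.2 1) q - DD (uvec 1) (fun q : PP => E q.1 q.2 0) q + DD tvec (fun q : PP => B q.1 q.2 2) q + σm * B q.1 q.2 2) = (fun _ : PP => (0:ℝ)) from funext e1_2, DD_zero]
  repeat first
  | rw [DD_const_mulX] at d1_2
  | rw [DD_addX] at d1_2
  | rw [DD_subX] at d1_2
  | rw [DD_mulX] at d1_2
  have d2_0 : DD (uvec 0) (fun q : PP => DD (uvec 1) (fun q : PP => B q.1 q.2 2) q - DD (uvec 2) (fun q : PP => B q.1 q.2 1) q - DD tvec (fun q : PP => E q.1 q.2 0) q - σe * E q.1 q.2 0) (x, t) = 0 := by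
    rw [show (fun q : PP => DD (uvec 1) (fun q : PP => B q.1 q.2 2) q - DD (uvec 2) (fun q : PP => B q.1 q.2 1) q - DD tvec (fun q : PP => E q.1 q.2 0) q - σe * E q.1 q.2 0) = (fun _ : PP => (0:ℝ)) from funext e2_0, DD_zero]
  repeat first
  | rw [DD_const_mulX] at d2_0
  | rw [DD_addX] at d2_0
  | rw [DD_subX] at d2_0
  | rw [DD_mulX] at d2_0
  have d2_1 : DD (uvec 0) (fun q : PP => DD (uvec 2) (fun q : PP => B q.1 q.2 0) q - DD (uvec 0) (fun q : PP => B q.1 q.2 2) q - DD tvec (fun q : PP => E q.1 q.2 1) q - σe * E q.1 q.2 1) (x, t) = 0 := by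
    rw [show (fun q : PP => DD (uvec 2) (fun q : PP => B q.1 q.2 0) q - DD (uvec 0) (fun q : PP => B q.1 q.2 2) q - DD tvec (fun q : PP => E q.1 q.2 1) q - σe * E q.1 q.2 1) = (fun _ : PP => (0:ℝ)) from funext e2_1, DD_zero]
  repeat first
  | rw [DD_const_mulX] at d2_1
  | rw [DD_addX] at d2_1
  | rw [DD_subX] at d2_1
  | rw [DD_mulX] at d2_1
  have d2_2 : DD (uvec 0) (fun q : PP => DD (uvec 0) (fun q : PP => B q.1 q.2 1) q - DD (uvec 1) (fun q : PP => B q.1 q.2 0) q - DD tvec (fun q : PP => E q.1 q.2 2) q - σe * E q.1 q.2 2) (x, t) = 0 := by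
    rw [show (fun q : PP => DD (uvec 0) (fun q : PP => B q.1 q.2 1) q - DD (uvec 1) (fun q : PP => B q.1 q.2 0) q - DD tvec (fun q : PP => E q.1 q.2 2) q - σe * E q.1 q.2 2) = (fun _ : PP => (0:ℝ)) from funext e2_2, DD_zero]
  repeat first
  | rw [DD_const_mulX] at d2_2
  | rw [DD_addX] at d2_2
  | rw [DD_subX] at d2_2
  | rw [DD_mulX] at d2_2
  have ccE0_t : DD (tvec) (DD (uvec 0) (fun q : PP => E q.1 q.2 0)) (x, t) = DD (uvec 0) (DD (tvec) (fun q : PP => E q.1 q.2 0)) (x, t) :=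
    DD_comm (sE 0) (tvec) (uvec 0) (x, t)
  have ccE1_t : DD (tvec) (DD (uvec 0) (fun q : PP => E q.1 q.2 1)) (x, t) = DD (uvec 0) (DD (tvec) (fun q : PP => E q.1 q.2 1)) (x, t) :=
    DD_comm (sE 1) (tvec) (uvec 0) (x, t)
  have ccE2_t : DD (tvec) (DD (uvec 0) (fun q : PP => E q.1 q.2 2)) (x, t) = DD (uvec 0) (DD (tvec) (fun q : PP => E q.1 q.2 2)) (x, t) :=
    DD_comm (sE 2) (tvec) (uvec 0) (x, t)
  have ccB0_t : DD (tvec) (DD (uvec 0) (fun q : PP => B q.1 q.2 0)) (x, t) = DD (uvec 0) (DD (tvec) (fun q : PP => B q.1 q.2 0)) (x, t) :=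
    DD_comm (sB 0) (tvec) (uvec 0) (x, t)
  have ccB1_t : DD (tvec) (DD (uvec 0) (fun q : PP => B q.1 q.2 1)) (x, t) = DD (uvec 0) (DD (tvec) (fun q : PP => B q.1 q.2 1)) (x, t) :=
    DD_comm (sB 1) (tvec) (uvec 0) (x, t)
  have ccB2_t : DD (tvec) (DD (uvec 0) (fun q : PP => B q.1 q.2 2)) (x, t) = DD (uvec 0) (DD (tvec) (fun q : PP => B q.1 q.2 2)) (x, t) :=
    DD_comm (sB 2) (tvec) (uvec 0) (x, t)
  have ccE0_1 : DD (uvec 1) (DD (uvec 0) (fun q : PP => E q.1 q.2 0)) (x, t) = DD (uvec 0) (DD (uvec 1) (fun q : PP => E q.1 q.2 0)) (x, t) :=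
    DD_comm (sE 0) (uvec 1) (uvec 0) (x, t)
  have ccE2_1 : DD (uvec 1) (DD (uvec 0) (fun q : PP => E q.1 q.2 2)) (x, t) = DD (uvec 0) (DD (uvec 1) (fun q : PP => E q.1 q.2 2)) (x, t) :=
    DD_comm (sE 2) (uvec 1) (uvec 0) (x, t)
  have ccE1_2 : DD (uvec 2) (DD (uvec 0) (fun q : PP => E q.1 q.2 1)) (x, t) = DD (uvec 0) (DD (uvec 2) (fun q : PP => E q.1 q.2 1)) (x, t) :=
    DD_comm (sE 1) (uvec 2) (uvec 0) (x, t)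
  have ccE0_2 : DD (uvec 2) (DD (uvec 0) (fun q : PP => E q.1 q.2 0)) (x, t) = DD (uvec 0) (DD (uvec 2) (fun q : PP => E q.1 q.2 0)) (x, t) :=
    DD_comm (sE 0) (uvec 2) (uvec 0) (x, t)
  have ccB0_1 : DD (uvec 1) (DD (uvec 0) (fun q : PP => B q.1 q.2 0)) (x, t) = DD (uvec 0) (DD (uvec 1) (fun q : PP => B q.1 q.2 0)) (x, t) :=
    DD_comm (sB 0) (uvec 1) (uvec 0) (x, t)
  have ccB2_1 : DD (uvec 1) (DD (uvec 0) (fun q : PP => B q.1 q.2 2)) (x, t) = DD (uvec 0) (DD (uvec 1) (fun q : PP => B q.1 q.2 2)) (x, t) :=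
    DD_comm (sB 2) (uvec 1) (uvec 0) (x, t)
  have ccB1_2 : DD (uvec 2) (DD (uvec 0) (fun q : PP => B q.1 q.2 1)) (x, t) = DD (uvec 0) (DD (uvec 2) (fun q : PP => B q.1 q.2 1)) (x, t) :=
    DD_comm (sB 1) (uvec 2) (uvec 0) (x, t)
  have ccB0_2 : DD (uvec 2) (DD (uvec 0) (fun q : PP => B q.1 q.2 0)) (x, t) = DD (uvec 0) (DD (uvec 2) (fun q : PP => B q.1 q.2 0)) (x, t) :=
    DD_comm (sB 0) (uvec 2) (uvec 0) (x, t)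
  simp only [div3]
  have hfun : (fun s => dot3 (pdv 0 E x s) (W x s) - dot3 (pdv 0 B x s) (V x s))
      = (fun s => (DD (uvec 0) (fun q : PP => E q.1 q.2 0) (x, s) * W x s 0 + DD (uvec 0) (fun q : PP => E q.1 q.2 1) (x, s) * W x s 1 + DD (uvec 0) (fun q : PP => E q.1 q.2 2) (x, s) * W x s 2) - (DD (uvec 0) (fun q : PP => B q.1 q.2 0) (x, s) * V x s 0 + DD (uvec 0) (fun q : PP => B q.1 q.2 1) (x, s) * V x s 1 + DD (uvec 0) (fun q : PP => B q.1 q.2 2) (x, s) * V x s 2)) := by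
    funext s
    simp only [dot3, pdv]
    rw [pd_eq_DD (fun z r => E z r 0) (dE 0) 0 x s, pd_eq_DD (fun z r => E z r 1) (dE 1) 0 x s, pd_eq_DD (fun z r => E z r 2) (dE 2) 0 x s, pd_eq_DD (fun z r => B z r 0) (dB 0) 0 x s, pd_eq_DD (fun z r => B z r 1) (dB 1) 0 x s, pd_eq_DD (fun z r => B z r 2) (dB 2) 0 x s]
  rw [hfun, deriv_eq_DD (fun z r => (DD (uvec 0) (fun q : PP => E q.1 q.2 0) (z, r) * W z r 0 + DD (uvec 0) (fun q : PP => E q.1 q.2 1) (z, r) * W z r 1 + DD (uvec 0) (fun q : PP => E q.1 q.2 2) (z, r) * W z r 2) - (DD (uvec 0) (fun q : PP => B q.1 q.2 0) (z, r) * V z r 0 + DD (uvec 0) (fun q : PP => B q.1 q.2 1) (z, r) * V z r 1 + DD (uvec 0) (fun q : PP => B q.1 q.2 2) (z, r) * V z r 2)) (by simp only [Prod.mk.eta]; fun_prop) x t]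
  have hdiv0 : (fun y => (cross3 (V y t) (pdv 0 E y t) + cross3 (W y t) (pdv 0 B y t)) 0)
      = (fun y => V y t 1 * DD (uvec 0) (fun q : PP => E q.1 q.2 2) (y, t) - V y t 2 * DD (uvec 0) (fun q : PP => E q.1 q.2 1) (y, t) + (W y t 1 * DD (uvec 0) (fun q : PP => B q.1 q.2 2) (y, t) - W y t 2 * DD (uvec 0) (fun q : PP => B q.1 q.2 1) (y, t))) := by
    funext y
    simp only [cross3, pdv, Pi.add_apply, Fin.isValue, Matrix.cons_val_zero, Matrix.cons_val_one,
      Matrix.cons_val_two, Matrix.head_cons, Matrix.tail_cons]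
    rw [pd_eq_DD (fun z r => E z r 2) (dE 2) 0 y t, pd_eq_DD (fun z r => E z r 1) (dE 1) 0 y t, pd_eq_DD (fun z r => B z r 2) (dB 2) 0 y t, pd_eq_DD (fun z r => B z r 1) (dB 1) 0 y t]
  have hdiv1 : (fun y => (cross3 (V y t) (pdv 0 E y t) + cross3 (W y t) (pdv 0 B y t)) 1)
      = (fun y => V y t 2 * DD (uvec 0) (fun q : PP => E q.1 q.2 0) (y, t) - V y t 0 * DD (uvec 0) (fun q : PP => E q.1 q.2 2) (y, t) + (W y t 2 * DD (uvec 0) (fun q : PP => B q.1 q.2 0) (y, t) - W y t 0 * DD (uvec 0) (fun q : PP => B q.1 q.2 2) (y, t))) := by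
    funext y
    simp only [cross3, pdv, Pi.add_apply, Fin.isValue, Matrix.cons_val_zero, Matrix.cons_val_one,
      Matrix.cons_val_two, Matrix.head_cons, Matrix.tail_cons]
    rw [pd_eq_DD (fun z r => E z r 0) (dE 0) 0 y t, pd_eq_DD (fun z r => E z r 2) (dE 2) 0 y t, pd_eq_DD (fun z r => B z r 0) (dB 0) 0 y t, pd_eq_DD (fun z r => B z r 2) (dB 2) 0 y t]
  have hdiv2 : (fun y => (cross3 (V y t) (pdv 0 E y t) + cross3 (W y t) (pdv 0 B y t)) 2)
      = (fun y => V y t 0 * DD (uvec 0) (fun q : PP => E q.1 q.2 1) (y, t) - V y t 1 * DD (uvec 0) (fun q : PP => E q.1 q.2 0) (y, t) + (W y t 0 * DD (uvec 0) (fun q : PP => B q.1 q.2 1) (y, t) - W y t 1 * DD (uvec 0) (fun q : PP => B q.1 q.2 0) (y, t))) := by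
    funext y
    simp only [cross3, pdv, Pi.add_apply, Fin.isValue, Matrix.cons_val_zero, Matrix.cons_val_one,
      Matrix.cons_val_two, Matrix.head_cons, Matrix.tail_cons]
    rw [pd_eq_DD (fun z r => E z r 1) (dE 1) 0 y t, pd_eq_DD (fun z r => E z r 0) (dE 0) 0 y t, pd_eq_DD (fun z r => B z r 1) (dB 1) 0 y t, pd_eq_DD (fun z r => B z r 0) (dB 0) 0 y t]
  rw [hdiv0, hdiv1, hdiv2]
  rw [pd_eq_DD (fun z r => V z r 1 * DD (uvec 0) (fun q : PP => E q.1 q.2 2) (z, r) - V z r 2 * DD (uvec 0) (fun q : PP => E q.1 q.2 1) (z, r) + (W z r 1 * DD (uvec 0) (fun q : PP => B q.1 q.2 2) (z, r) - W z r 2 * DD (uvec 0) (fun q : PP => B q.1 q.2 1) (z, r))) (by simp only [Prod.mk.eta]; fun_prop) 0 x t]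
  rw [pd_eq_DD (fun z r => V z r 2 * DD (uvec 0) (fun q : PP => E q.1 q.2 0) (z, r) - V z r 0 * DD (uvec 0) (fun q : PP => E q.1 q.2 2) (z, r) + (W z r 2 * DD (uvec 0) (fun q : PP => B q.1 q.2 0) (z, r) - W z r 0 * DD (uvec 0) (fun q : PP => B q.1 q.2 2) (z, r))) (by simp only [Prod.mk.eta]; fun_prop) 1 x t]
  rw [pd_eq_DD (fun z r => V z r 0 * DD (uvec 0) (fun q : PP => E q.1 q.2 1) (z, r) - V z r 1 * DD (uvec 0) (fun q : PP => E q.1 q.2 0) (z, r) + (W z r 0 * DD (uvec 0) (fun q : PP => B q.1 q.2 1) (z, r) - W z r 1 * DD (uvec 0) (fun q : PP => B q.1 q.2 0) (z, r))) (by simp only [Prod.mk.eta]; fun_prop) 2 x t]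
  simp only [Prod.mk.eta]
  repeat first
  | rw [DD_const_mulX]
  | rw [DD_addX]
  | rw [DD_subX]
  | rw [DD_mulX]
  linear_combination
    DD (uvec 0) (fun q : PP => E q.1 q.2 0) (x, t) * e3_0 (x, t)
      + DD (uvec 0) (fun q : PP => B q.1 q.2 0) (x, t) * e4_0 (x, t)
      - W (x, t).1 (x, t).2 0 * d2_0
      - V (x, t).1 (x, t).2 0 * d1_0
      + DD (uvec 0) (fun q : PP => E q.1 q.2 1) (x, t) * e3_1 (x, t)
      + DD (uvec 0) (fun q : PP => B q.1 q.2 1) (x, t) * e4_1 (x, t)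
      - W (x, t).1 (x, t).2 1 * d2_1
      - V (x, t).1 (x, t).2 1 * d1_1
      + DD (uvec 0) (fun q : PP => E q.1 q.2 2) (x, t) * e3_2 (x, t)
      + DD (uvec 0) (fun q : PP => B q.1 q.2 2) (x, t) * e4_2 (x, t)
      - W (x, t).1 (x, t).2 2 * d2_2
      - V (x, t).1 (x, t).2 2 * d1_2
      + W (x, t).1 (x, t).2 0 * ccE0_t
      - V (x, t).1 (x, t).2 0 * ccB0_t
      + W (x, t).1 (x, t).2 1 * ccE1_t
      - V (x, t).1 (x, t).2 1 * ccB1_t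
      + W (x, t).1 (x, t).2 2 * ccE2_t
      - V (x, t).1 (x, t).2 2 * ccB2_t
      + V (x, t).1 (x, t).2 2 * ccE0_1
      - V (x, t).1 (x, t).2 0 * ccE2_1
      + W (x, t).1 (x, t).2 2 * ccB0_1
      - W (x, t).1 (x, t).2 0 * ccB2_1
      + V (x, t).1 (x, t).2 0 * ccE1_2
      - V (x, t).1 (x, t).2 1 * ccE0_2
      + W (x, t).1 (x, t).2 0 * ccB1_2
      - W (x, t).1 (x, t).2 1 * ccB0_2
end
end

section
/- Let E, B and E', B' be two smooth solutions of the symmetrized Maxwell system curl E + ∂B/∂t + σ B = 0, curl B − ∂E/∂t − σ E = 0 (with σₑ = σₘ = σ). Define τ(x,t) = E(x,t)·B'(x,−t) + B(x,t)·E'(x,−t) and χ(x,t) = E(x,t) × E'(x,−t) − B(x,t) × B'(x,−t). Then ∂τ/∂t + div χ = 0. -/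
noncomputable section

lemma comp_cd {F : V3 → ℝ → V3} (hF : Smooth2 F) (i : Fin 3) :
    ContDiff ℝ (⊤ : ℕ∞) (fun p : V3 × ℝ => F p.1 p.2 i) :=
  (ContinuousLinearMap.proj (R := ℝ) (φ := fun _ : Fin 3 => ℝ) i).contDiff.comp hF

lemma diffT {F : V3 → ℝ → V3} (hF : Smooth2 F) (x : V3) (t : ℝ) (i : Fin 3) :
    DifferentiableAt ℝ (fun s => F x s i) t :=
  (((comp_cd hF i).comp (contDiff_const.prodMk contDiff_id)).differentiable (by simp)).differentiableAt

lemma diffS {F : V3 → ℝ → V3} (hF : Smooth2 F) (x : V3) (t : ℝ) (i : Fin 3) :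
    DifferentiableAt ℝ (fun y => F y t i) x :=
  (((comp_cd hF i).comp (contDiff_id.prodMk contDiff_const)).differentiable (by simp)).differentiableAt

lemma hasDerivAt_negcomp {F : V3 → ℝ → V3} (hF : Smooth2 F) (x : V3) (t : ℝ) (i : Fin 3) :
    HasDerivAt (fun s => F x (-s) i) (-(deriv (fun s => F x s i) (-t))) t := by
  simpa [mul_comm, Function.comp_def] using ((diffT hF x (-t) i).hasDerivAt).comp t (hasDerivAt_neg t)

lemma pd_comb_s8 (i : Fin 3) (x : V3) (f g h k p q r s : V3 → ℝ)
    (hf : DifferentiableAt ℝ f x) (hg : DifferentiableAt ℝ g x)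
    (hh : DifferentiableAt ℝ h x) (hk : DifferentiableAt ℝ k x)
    (hp : DifferentiableAt ℝ p x) (hq : DifferentiableAt ℝ q x)
    (hr : DifferentiableAt ℝ r x) (hs : DifferentiableAt ℝ s x) :
    pd i (fun y => f y * g y - h y * k y - (p y * q y - r y * s y)) x
      = (pd i f x * g x + f x * pd i g x) - (pd i h x * k x + h x * pd i k x)
        - ((pd i p x * q x + p x * pd i q x) - (pd i r x * s x + r x * pd i s x)) := by
  have H := (((hf.hasFDerivAt.mul hg.hasFDerivAt).sub (hh.hasFDerivAt.mul hk.hasFDerivAt)).sub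
    ((hp.hasFDerivAt.mul hq.hasFDerivAt).sub (hr.hasFDerivAt.mul hs.hasFDerivAt)))
  simp only [pd, show (fun y => f y * g y - h y * k y - (p y * q y - r y * s y)) = f * g - h * k - (p * q - r * s) from rfl, H.fderiv]
  simp [ContinuousLinearMap.sub_apply, ContinuousLinearMap.add_apply,
    ContinuousLinearMap.smul_apply, smul_eq_mul]
  ring

/-- the two-solution (time-nonlocal) representation of the duality
conservation law, with σₑ = σₘ = σ. -/
theorem stmt8 (σ : ℝ) (E B E' B' : V3 → ℝ → V3)
    (hE : Smooth2 E) (hB : Smooth2 B) (hE' : Smooth2 E') (hB' : Smooth2 B')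
    (h1 : ∀ x t, curl3 (fun y => E y t) x + dt B x t + σ • B x t = 0)
    (h2 : ∀ x t, curl3 (fun y => B y t) x - dt E x t - σ • E x t = 0)
    (h1' : ∀ x t, curl3 (fun y => E' y t) x + dt B' x t + σ • B' x t = 0)
    (h2' : ∀ x t, curl3 (fun y => B' y t) x - dt E' x t - σ • E' x t = 0) :
    ∀ x t,
      deriv (fun s => dot3 (E x s) (B' x (-s)) + dot3 (B x s) (E' x (-s))) t
        + div3 (fun y => cross3 (E y t) (E' y (-t)) - cross3 (B y t) (B' y (-t))) x
        = 0 := by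
  intro x t
  -- time derivative part
  have hE0 := (diffT hE x t 0).hasDerivAt
  have hE1 := (diffT hE x t 1).hasDerivAt
  have hE2 := (diffT hE x t 2).hasDerivAt
  have hB0 := (diffT hB x t 0).hasDerivAt
  have hB1 := (diffT hB x t 1).hasDerivAt
  have hB2 := (diffT hB x t 2).hasDerivAt
  have hB'0 := hasDerivAt_negcomp hB' x t 0
  have hB'1 := hasDerivAt_negcomp hB' x t 1
  have hB'2 := hasDerivAt_negcomp hB' x t 2
  have hE'0 := hasDerivAt_negcomp hE' x t 0
  have hE'1 := hasDerivAt_negcomp hE' x t 1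
  have hE'2 := hasDerivAt_negcomp hE' x t 2
  have Hd : HasDerivAt (fun s => dot3 (E x s) (B' x (-s)) + dot3 (B x s) (E' x (-s))) _ t :=
    ((((hE0.mul hB'0).add (hE1.mul hB'1)).add (hE2.mul hB'2)).add
      (((hB0.mul hE'0).add (hB1.mul hE'1)).add (hB2.mul hE'2)))
  rw [Hd.deriv]
  -- divergence part
  simp only [div3, Pi.sub_apply, cross3, Matrix.cons_val_zero, Matrix.cons_val_one,
    Matrix.head_cons, Matrix.cons_val_two, Matrix.tail_cons]
  rw [pd_comb_s8 0 x _ _ _ _ _ _ _ _ (diffS hE x t 1) (diffS hE' x (-t) 2) (diffS hE x t 2)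
      (diffS hE' x (-t) 1) (diffS hB x t 1) (diffS hB' x (-t) 2) (diffS hB x t 2)
      (diffS hB' x (-t) 1),
    pd_comb_s8 1 x _ _ _ _ _ _ _ _ (diffS hE x t 2) (diffS hE' x (-t) 0) (diffS hE x t 0)
      (diffS hE' x (-t) 2) (diffS hB x t 2) (diffS hB' x (-t) 0) (diffS hB x t 0)
      (diffS hB' x (-t) 2),
    pd_comb_s8 2 x _ _ _ _ _ _ _ _ (diffS hE x t 0) (diffS hE' x (-t) 1) (diffS hE x t 1)
      (diffS hE' x (-t) 0) (diffS hB x t 0) (diffS hB' x (-t) 1) (diffS hB x t 1)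
      (diffS hB' x (-t) 0)]
  -- Maxwell componentwise
  have m10 : pd 1 (fun y => E y t 2) x - pd 2 (fun y => E y t 1) x
      + deriv (fun s => B x s 0) t + σ * B x t 0 = 0 := by
    have := congrFun (h1 x t) 0; simpa [curl3, dt, Matrix.vecHead, Matrix.vecTail] using this
  have m11 : pd 2 (fun y => E y t 0) x - pd 0 (fun y => E y t 2) x
      + deriv (fun s => B x s 1) t + σ * B x t 1 = 0 := by
    have := congrFun (h1 x t) 1; simpa [curl3, dt, Matrix.vecHead, Matrix.vecTail] using this
  have m12 : pd 0 (fun y => E y t 1) x - pd 1 (fun y => E y t 0) x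
      + deriv (fun s => B x s 2) t + σ * B x t 2 = 0 := by
    have := congrFun (h1 x t) 2; simpa [curl3, dt, Matrix.vecHead, Matrix.vecTail] using this
  have m20 : pd 1 (fun y => B y t 2) x - pd 2 (fun y => B y t 1) x
      - deriv (fun s => E x s 0) t - σ * E x t 0 = 0 := by
    have := congrFun (h2 x t) 0; simpa [curl3, dt, Matrix.vecHead, Matrix.vecTail] using this
  have m21 : pd 2 (fun y => B y t 0) x - pd 0 (fun y => B y t 2) x
      - deriv (fun s => E x s 1) t - σ * E x t 1 = 0 := by
    have := congrFun (h2 x t) 1; simpa [curl3, dt, Matrix.vecHead, Matrix.vecTail] using this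
  have m22 : pd 0 (fun y => B y t 1) x - pd 1 (fun y => B y t 0) x
      - deriv (fun s => E x s 2) t - σ * E x t 2 = 0 := by
    have := congrFun (h2 x t) 2; simpa [curl3, dt, Matrix.vecHead, Matrix.vecTail] using this
  have n10 : pd 1 (fun y => E' y (-t) 2) x - pd 2 (fun y => E' y (-t) 1) x
      + deriv (fun s => B' x s 0) (-t) + σ * B' x (-t) 0 = 0 := by
    have := congrFun (h1' x (-t)) 0; simpa [curl3, dt, Matrix.vecHead, Matrix.vecTail] using this
  have n11 : pd 2 (fun y => E' y (-t) 0) x - pd 0 (fun y => E' y (-t) 2) x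
      + deriv (fun s => B' x s 1) (-t) + σ * B' x (-t) 1 = 0 := by
    have := congrFun (h1' x (-t)) 1; simpa [curl3, dt, Matrix.vecHead, Matrix.vecTail] using this
  have n12 : pd 0 (fun y => E' y (-t) 1) x - pd 1 (fun y => E' y (-t) 0) x
      + deriv (fun s => B' x s 2) (-t) + σ * B' x (-t) 2 = 0 := by
    have := congrFun (h1' x (-t)) 2; simpa [curl3, dt, Matrix.vecHead, Matrix.vecTail] using this
  have n20 : pd 1 (fun y => B' y (-t) 2) x - pd 2 (fun y => B' y (-t) 1) x
      - deriv (fun s => E' x s 0) (-t) - σ * E' x (-t) 0 = 0 := by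
    have := congrFun (h2' x (-t)) 0; simpa [curl3, dt, Matrix.vecHead, Matrix.vecTail] using this
  have n21 : pd 2 (fun y => B' y (-t) 0) x - pd 0 (fun y => B' y (-t) 2) x
      - deriv (fun s => E' x s 1) (-t) - σ * E' x (-t) 1 = 0 := by
    have := congrFun (h2' x (-t)) 1; simpa [curl3, dt, Matrix.vecHead, Matrix.vecTail] using this
  have n22 : pd 0 (fun y => B' y (-t) 1) x - pd 1 (fun y => B' y (-t) 0) x
      - deriv (fun s => E' x s 2) (-t) - σ * E' x (-t) 2 = 0 := by
    have := congrFun (h2' x (-t)) 2; simpa [curl3, dt, Matrix.vecHead, Matrix.vecTail] using this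

  linear_combination (E' x (-t) 0) * m10 + (E' x (-t) 1) * m11 + (E' x (-t) 2) * m12
    - (B' x (-t) 0) * m20 - (B' x (-t) 1) * m21 - (B' x (-t) 2) * m22
    - (E x t 0) * n10 - (E x t 1) * n11 - (E x t 2) * n12
    + (B x t 0) * n20 + (B x t 1) * n21 + (B x t 2) * n22
end
end

section
/- Let E, B be a smooth solution of curl E + ∂B/∂t + σ B = 0, curl B − ∂E/∂t − σ E = 0. Then τ(x,t) = E(x,t)·B(x,−t) + B(x,t)·E(x,−t) and χ(x,t) = E(x,t) × E(x,−t) − B(x,t) × B(x,−t) satisfy ∂τ/∂t + div χ = 0. -/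
noncomputable section

lemma diff_space {F : V3 → ℝ → V3} (hF : Smooth2 F) (i : Fin 3) (t : ℝ) :
    Differentiable ℝ (fun y : V3 => F y t i) := by
  have h : ContDiff ℝ (⊤ : ℕ∞) (fun p : V3 × ℝ => F p.1 p.2 i) :=
    (ContinuousLinearMap.proj i : V3 →L[ℝ] ℝ).contDiff.comp hF
  exact (h.comp (contDiff_id.prodMk contDiff_const)).differentiable (by simp)

lemma diff_time {F : V3 → ℝ → V3} (hF : Smooth2 F) (i : Fin 3) (x : V3) :
    Differentiable ℝ (fun s : ℝ => F x s i) := by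
  have h : ContDiff ℝ (⊤ : ℕ∞) (fun p : V3 × ℝ => F p.1 p.2 i) :=
    (ContinuousLinearMap.proj i : V3 →L[ℝ] ℝ).contDiff.comp hF
  exact (h.comp (contDiff_const.prodMk contDiff_id)).differentiable (by simp)

lemma pd_expr {x : V3} (i : Fin 3) (f1 g1 f2 g2 f3 g3 f4 g4 : V3 → ℝ)
    (h1 : DifferentiableAt ℝ f1 x) (h2 : DifferentiableAt ℝ g1 x)
    (h3 : DifferentiableAt ℝ f2 x) (h4 : DifferentiableAt ℝ g2 x)
    (h5 : DifferentiableAt ℝ f3 x) (h6 : DifferentiableAt ℝ g3 x)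
    (h7 : DifferentiableAt ℝ f4 x) (h8 : DifferentiableAt ℝ g4 x) :
    pd i (fun y => f1 y * g1 y - f2 y * g2 y - (f3 y * g3 y - f4 y * g4 y)) x
      = pd i f1 x * g1 x + f1 x * pd i g1 x
        - (pd i f2 x * g2 x + f2 x * pd i g2 x)
        - (pd i f3 x * g3 x + f3 x * pd i g3 x
           - (pd i f4 x * g4 x + f4 x * pd i g4 x)) := by
  unfold pd
  rw [fderiv_fun_sub (((h1.fun_mul h2).fun_sub (h3.fun_mul h4))) ((h5.fun_mul h6).fun_sub (h7.fun_mul h8)),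
      fderiv_fun_sub (h1.fun_mul h2) (h3.fun_mul h4), fderiv_fun_sub (h5.fun_mul h6) (h7.fun_mul h8),
      fderiv_fun_mul h1 h2, fderiv_fun_mul h3 h4, fderiv_fun_mul h5 h6, fderiv_fun_mul h7 h8]
  simp only [ContinuousLinearMap.sub_apply, ContinuousLinearMap.add_apply,
    ContinuousLinearMap.smul_apply, smul_eq_mul]
  ring

/-- the one-solution time-nonlocal representation of the duality
conservation law. -/
theorem stmt9 (σ : ℝ) (E B : V3 → ℝ → V3)
    (hE : Smooth2 E) (hB : Smooth2 B)
    (h1 : ∀ x t, curl3 (fun y => E y t) x + dt B x t + σ • B x t = 0)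
    (h2 : ∀ x t, curl3 (fun y => B y t) x - dt E x t - σ • E x t = 0) :
    ∀ x t,
      deriv (fun s => dot3 (E x s) (B x (-s)) + dot3 (B x s) (E x (-s))) t
        + div3 (fun y => cross3 (E y t) (E y (-t)) - cross3 (B y t) (B y (-t))) x
        = 0 := by
  intro x t
  -- time derivatives
  have hEt : ∀ i : Fin 3, HasDerivAt (fun s => E x s i) (deriv (fun s => E x s i) t) t :=
    fun i => ((diff_time hE i x) t).hasDerivAt
  have hBt : ∀ i : Fin 3, HasDerivAt (fun s => B x s i) (deriv (fun s => B x s i) t) t :=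
    fun i => ((diff_time hB i x) t).hasDerivAt
  have hEt' : ∀ i : Fin 3, HasDerivAt (fun s : ℝ => E x (-s) i)
      (deriv (fun s => E x s i) (-t) * -1) t :=
    fun i => (((diff_time hE i x) (-t)).hasDerivAt).comp t (hasDerivAt_neg t)
  have hBt' : ∀ i : Fin 3, HasDerivAt (fun s : ℝ => B x (-s) i)
      (deriv (fun s => B x s i) (-t) * -1) t :=
    fun i => (((diff_time hB i x) (-t)).hasDerivAt).comp t (hasDerivAt_neg t)
  have hdot : HasDerivAt (fun s => dot3 (E x s) (B x (-s)) + dot3 (B x s) (E x (-s)))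
      (((deriv (fun s => E x s 0) t * B x (-t) 0 + E x t 0 * (deriv (fun s => B x s 0) (-t) * -1))
        + (deriv (fun s => E x s 1) t * B x (-t) 1 + E x t 1 * (deriv (fun s => B x s 1) (-t) * -1))
        + (deriv (fun s => E x s 2) t * B x (-t) 2 + E x t 2 * (deriv (fun s => B x s 2) (-t) * -1)))
       + ((deriv (fun s => B x s 0) t * E x (-t) 0 + B x t 0 * (deriv (fun s => E x s 0) (-t) * -1))
        + (deriv (fun s => B x s 1) t * E x (-t) 1 + B x t 1 * (deriv (fun s => E x s 1) (-t) * -1))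
        + (deriv (fun s => B x s 2) t * E x (-t) 2 + B x t 2 * (deriv (fun s => E x s 2) (-t) * -1)))) t := by
    unfold dot3
    exact ((((hEt 0).mul (hBt' 0)).add ((hEt 1).mul (hBt' 1))).add ((hEt 2).mul (hBt' 2))).add
      ((((hBt 0).mul (hEt' 0)).add ((hBt 1).mul (hEt' 1))).add ((hBt 2).mul (hEt' 2)))
  rw [hdot.deriv]
  -- divergence
  have dE : ∀ (i : Fin 3) (s : ℝ), DifferentiableAt ℝ (fun y => E y s i) x :=
    fun i s => diff_space hE i s x
  have dB : ∀ (i : Fin 3) (s : ℝ), DifferentiableAt ℝ (fun y => B y s i) x :=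
    fun i s => diff_space hB i s x
  unfold div3
  simp only [Pi.sub_apply, cross3, Matrix.cons_val_zero, Matrix.cons_val_one, Matrix.head_cons,
    Matrix.cons_val_two, Matrix.tail_cons]
  rw [pd_expr 0 (fun y => E y t 1) (fun y => E y (-t) 2) (fun y => E y t 2) (fun y => E y (-t) 1)
        (fun y => B y t 1) (fun y => B y (-t) 2) (fun y => B y t 2) (fun y => B y (-t) 1)
        (dE 1 t) (dE 2 (-t)) (dE 2 t) (dE 1 (-t)) (dB 1 t) (dB 2 (-t)) (dB 2 t) (dB 1 (-t)),
      pd_expr 1 (fun y => E y t 2) (fun y => E y (-t) 0) (fun y => E y t 0) (fun y => E y (-t) 2)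
        (fun y => B y t 2) (fun y => B y (-t) 0) (fun y => B y t 0) (fun y => B y (-t) 2)
        (dE 2 t) (dE 0 (-t)) (dE 0 t) (dE 2 (-t)) (dB 2 t) (dB 0 (-t)) (dB 0 t) (dB 2 (-t)),
      pd_expr 2 (fun y => E y t 0) (fun y => E y (-t) 1) (fun y => E y t 1) (fun y => E y (-t) 0)
        (fun y => B y t 0) (fun y => B y (-t) 1) (fun y => B y t 1) (fun y => B y (-t) 0)
        (dE 0 t) (dE 1 (-t)) (dE 1 t) (dE 0 (-t)) (dB 0 t) (dB 1 (-t)) (dB 1 t) (dB 0 (-t))]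
  -- componentwise Maxwell equations
  have e10 : ∀ s, pd 1 (fun y => E y s 2) x - pd 2 (fun y => E y s 1) x
      + deriv (fun u => B x u 0) s + σ * B x s 0 = 0 := fun s => by
    simpa [curl3, dt, Matrix.vecHead, Matrix.vecTail] using congrFun (h1 x s) 0
  have e11 : ∀ s, pd 2 (fun y => E y s 0) x - pd 0 (fun y => E y s 2) x
      + deriv (fun u => B x u 1) s + σ * B x s 1 = 0 := fun s => by
    simpa [curl3, dt, Matrix.vecHead, Matrix.vecTail] using congrFun (h1 x s) 1
  have e12 : ∀ s, pd 0 (fun y => E y s 1) x - pd 1 (fun y => E y s 0) x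
      + deriv (fun u => B x u 2) s + σ * B x s 2 = 0 := fun s => by
    simpa [curl3, dt, Matrix.vecHead, Matrix.vecTail] using congrFun (h1 x s) 2
  have e20 : ∀ s, pd 1 (fun y => B y s 2) x - pd 2 (fun y => B y s 1) x
      - deriv (fun u => E x u 0) s - σ * E x s 0 = 0 := fun s => by
    simpa [curl3, dt, Matrix.vecHead, Matrix.vecTail] using congrFun (h2 x s) 0
  have e21 : ∀ s, pd 2 (fun y => B y s 0) x - pd 0 (fun y => B y s 2) x
      - deriv (fun u => E x u 1) s - σ * E x s 1 = 0 := fun s => by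
    simpa [curl3, dt, Matrix.vecHead, Matrix.vecTail] using congrFun (h2 x s) 1
  have e22 : ∀ s, pd 0 (fun y => B y s 1) x - pd 1 (fun y => B y s 0) x
      - deriv (fun u => E x u 2) s - σ * E x s 2 = 0 := fun s => by
    simpa [curl3, dt, Matrix.vecHead, Matrix.vecTail] using congrFun (h2 x s) 2
  linear_combination
      (E x (-t) 0) * e10 t + (E x (-t) 1) * e11 t + (E x (-t) 2) * e12 t
    - (B x (-t) 0) * e20 t - (B x (-t) 1) * e21 t - (B x (-t) 2) * e22 t
    - (E x t 0) * e10 (-t) - (E x t 1) * e11 (-t) - (E x t 2) * e12 (-t)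
    + (B x t 0) * e20 (-t) + (B x t 1) * e21 (-t) + (B x t 2) * e22 (-t)
end
end

section
/- Suppose E, B, ρₑ, ρₘ are smooth and satisfy curl E + ∂B/∂t + σₘ B = 0, curl B − ∂E/∂t − σₑ E = 0, div E = ρₑ, div B = ρₘ, and suppose that for every solution, the duality-rotated fields Ē = E cos α − B sin α, B̄ = E sin α + B cos α (with ρ̄ₑ = ρₑ cos α − ρₘ sin α, ρ̄ₘ = ρₑ sin α + ρₘ cos α) again satisfy the system for all α ∈ ℝ. If there exist a point and a solution where B ≠ 0 (or E ≠ 0), then σₘ = σₑ. -/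
noncomputable section

lemma pd_neg (i : Fin 3) (f : V3 → ℝ) (x : V3) :
    pd i (fun y => -(f y)) x = -(pd i f x) := by
  simp [pd, fderiv_neg]

lemma curl3_neg (F : V3 → V3) (x : V3) :
    curl3 (fun y => -(F y)) x = -(curl3 F x) := by
  funext i
  fin_cases i <;>
    simp [curl3, Pi.neg_apply, ← pd_neg] <;> ring_nf <;>
    simp [pd, fderiv_neg] <;> ring

lemma dt_neg (F : V3 → ℝ → V3) (x : V3) (t : ℝ) :
    dt (fun y s => -(F y s)) x t = -(dt F x t) := by
  funext i
  simp [dt, Pi.neg_apply, deriv.neg]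

/-- if the duality rotations map every smooth solution to a solution
for all angles α, and there is a solution with B ≠ 0 (or E ≠ 0) somewhere, then
σₘ = σₑ. -/
theorem stmt12 (σe σm : ℝ)
    (H : ∀ (E B : V3 → ℝ → V3) (ρe ρm : V3 → ℝ → ℝ),
      Smooth2 E → Smooth2 B → SmoothS ρe → SmoothS ρm →
      (∀ x t, curl3 (fun y => E y t) x + dt B x t + σm • B x t = 0) →
      (∀ x t, curl3 (fun y => B y t) x - dt E x t - σe • E x t = 0) →
      (∀ x t, div3 (fun y => E y t) x = ρe x t) →
      (∀ x t, div3 (fun y => B y t) x = ρm x t) →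
      ∀ α : ℝ,
        (∀ x t, curl3 (fun y => Real.cos α • E y t - Real.sin α • B y t) x
            + dt (fun y s => Real.sin α • E y s + Real.cos α • B y s) x t
            + σm • (Real.sin α • E x t + Real.cos α • B x t) = 0) ∧
        (∀ x t, curl3 (fun y => Real.sin α • E y t + Real.cos α • B y t) x
            - dt (fun y s => Real.cos α • E y s - Real.sin α • B y s) x t
            - σe • (Real.cos α • E x t - Real.sin α • B x t) = 0) ∧
        (∀ x t, div3 (fun y => Real.cos α • E y t - Real.sin α • B y t) x
            = Real.cos α * ρe x t - Real.sin α * ρm x t) ∧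
        (∀ x t, div3 (fun y => Real.sin α • E y t + Real.cos α • B y t) x
            = Real.sin α * ρe x t + Real.cos α * ρm x t))
    (hex : ∃ (E B : V3 → ℝ → V3) (ρe ρm : V3 → ℝ → ℝ) (x : V3) (t : ℝ),
      Smooth2 E ∧ Smooth2 B ∧ SmoothS ρe ∧ SmoothS ρm ∧
      (∀ x t, curl3 (fun y => E y t) x + dt B x t + σm • B x t = 0) ∧
      (∀ x t, curl3 (fun y => B y t) x - dt E x t - σe • E x t = 0) ∧
      (∀ x t, div3 (fun y => E y t) x = ρe x t) ∧
      (∀ x t, div3 (fun y => B y t) x = ρm x t) ∧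
      (B x t ≠ 0 ∨ E x t ≠ 0)) :
    σm = σe := by
  obtain ⟨E, B, ρe, ρm, x, t, hE, hB, hρe, hρm, h1, h2, h3, h4, hnz⟩ := hex
  have h := H E B ρe ρm hE hB hρe hρm h1 h2 h3 h4 (Real.pi / 2)
  obtain ⟨g1, g2, -, -⟩ := h
  have e1 := g1 x t
  have e2 := g2 x t
  simp only [Real.cos_pi_div_two, Real.sin_pi_div_two, zero_smul, one_smul,
    zero_sub, zero_add, add_zero, sub_zero] at e1 e2
  rw [curl3_neg] at e1
  rw [dt_neg] at e2
  -- e1 : -(curl3 B) + dt E + σm • E = 0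
  -- e2 : curl3 E - -(dt B) - σe • (-(B x t)) = 0  i.e. curl3 E + dt B + σe • B = 0
  have k2 := h2 x t
  have k1 := h1 x t
  -- from e1 and k2 : (σm - σe) • E x t = 0
  have hEzero : (σm - σe) • E x t = 0 := by
    have : (σm - σe) • E x t =
        (-(curl3 (fun y => B y t) x) + dt E x t + σm • E x t)
        + (curl3 (fun y => B y t) x - dt E x t - σe • E x t) := by
      module
    rw [this, e1, k2, add_zero]
  have hBzero : (σe - σm) • B x t = 0 := by
    have : (σe - σm) • B x t =
        (curl3 (fun y => E y t) x - -(dt B x t) - σe • -(B x t))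
        - (curl3 (fun y => E y t) x + dt B x t + σm • B x t) := by
      module
    rw [this, e2, k1, sub_zero]
  by_contra hne
  have hd : σm - σe ≠ 0 := sub_ne_zero.mpr hne
  have hd' : σe - σm ≠ 0 := sub_ne_zero.mpr (Ne.symm hne)
  rcases hnz with hb | he
  · exact hb ((smul_eq_zero.mp hBzero).resolve_left hd')
  · exact he ((smul_eq_zero.mp hEzero).resolve_left hd)
end
end

section
/- Let E, B solve curl E + ∂B/∂t + σₘ B = 0 and curl B − ∂E/∂t − σₑ E = 0, and take the adjoint solution V(x,t) = (e^{σₘ t},0,0), W(x,t) = (e^{σₑ t},0,0). Then τ = (∂B³/∂y − ∂B²/∂z − σₑ E¹) e^{σₑ t} + (∂E³/∂y − ∂E²/∂z + σₘ B¹) e^{σₘ t} and χ = (0, −∂E³/∂t e^{σₘ t} − ∂B³/∂t e^{σₑ t}, ∂E²/∂t e^{σₘ t} + ∂B²/∂t e^{σₑ t}) satisfy ∂τ/∂t + div χ = 0. -/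
noncomputable section

open ContinuousLinearMap in
lemma pd_slice (G : V3 × ℝ → ℝ) (hG : ContDiff ℝ (⊤ : ℕ∞) G) (i : Fin 3) (s : ℝ) (x : V3) :
    pd i (fun y => G (y, s)) x = fderiv ℝ G (x, s) (Pi.single i 1, 0) := by
  have h : HasFDerivAt (fun y => G (y, s)) ((fderiv ℝ G (x, s)).comp (inl ℝ V3 ℝ)) x :=
    ((hG.differentiable (by simp) (x, s)).hasFDerivAt).comp x (hasFDerivAt_prodMk_left x s)
  rw [pd, h.fderiv]
  simp

lemma hasDerivAt_time (G : V3 × ℝ → ℝ) (hG : ContDiff ℝ (⊤ : ℕ∞) G) (x : V3) (t : ℝ) :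
    HasDerivAt (fun s => G (x, s)) (fderiv ℝ G (x, t) (0, 1)) t := by
  have h := ((hG.differentiable (by simp) (x, t)).hasFDerivAt).comp_hasDerivAt t
    ((hasDerivAt_const t x).prodMk (hasDerivAt_id t))
  simpa [Function.comp_def] using h

lemma fderiv_hasFDerivAt (G : V3 × ℝ → ℝ) (hG : ContDiff ℝ (⊤ : ℕ∞) G) (p : V3 × ℝ) :
    HasFDerivAt (fderiv ℝ G) (fderiv ℝ (fderiv ℝ G) p) p :=
  (((hG.fderiv_right (m := (⊤ : ℕ∞)) (mod_cast le_top)).differentiable (by simp)) p).hasFDerivAt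

lemma hasFDerivAt_D (G : V3 × ℝ → ℝ) (hG : ContDiff ℝ (⊤ : ℕ∞) G) (p : V3 × ℝ) (w : V3 × ℝ) :
    HasFDerivAt (fun q => fderiv ℝ G q w) ((fderiv ℝ (fderiv ℝ G) p).flip w) p := by
  have h := (fderiv_hasFDerivAt G hG p).clm_apply (hasFDerivAt_const w p)
  simpa using h

lemma hasDerivAt_time_D (G : V3 × ℝ → ℝ) (hG : ContDiff ℝ (⊤ : ℕ∞) G) (x : V3) (t : ℝ) (w : V3 × ℝ) :
    HasDerivAt (fun s => fderiv ℝ G (x, s) w) (fderiv ℝ (fderiv ℝ G) (x, t) (0, 1) w) t := by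
  have h := (hasFDerivAt_D G hG (x, t) w).comp_hasDerivAt t
    ((hasDerivAt_const t x).prodMk (hasDerivAt_id t))
  simpa [Function.comp_def] using h

open ContinuousLinearMap in
lemma pd_D (G : V3 × ℝ → ℝ) (hG : ContDiff ℝ (⊤ : ℕ∞) G) (i : Fin 3) (t : ℝ) (x : V3) (w : V3 × ℝ) :
    pd i (fun y => fderiv ℝ G (y, t) w) x
      = fderiv ℝ (fderiv ℝ G) (x, t) (Pi.single i 1, 0) w := by
  have h : HasFDerivAt (fun y => fderiv ℝ G (y, t) w)
      (((fderiv ℝ (fderiv ℝ G) (x, t)).flip w).comp (inl ℝ V3 ℝ)) x :=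
    HasFDerivAt.comp (f := fun e : V3 => (e, t)) x (hasFDerivAt_D G hG (x, t) w)
      (hasFDerivAt_prodMk_left (𝕜 := ℝ) x t)
  rw [pd, h.fderiv]
  simp

open ContinuousLinearMap in
lemma diff_D (G : V3 × ℝ → ℝ) (hG : ContDiff ℝ (⊤ : ℕ∞) G) (t : ℝ) (x : V3) (w : V3 × ℝ) :
    DifferentiableAt ℝ (fun y => fderiv ℝ G (y, t) w) x :=
  (HasFDerivAt.comp (f := fun e : V3 => (e, t)) x (hasFDerivAt_D G hG (x, t) w)
      (hasFDerivAt_prodMk_left (𝕜 := ℝ) x t)).differentiableAt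

lemma DD_symm (G : V3 × ℝ → ℝ) (hG : ContDiff ℝ (⊤ : ℕ∞) G) (p : V3 × ℝ) (v w : V3 × ℝ) :
    fderiv ℝ (fderiv ℝ G) p v w = fderiv ℝ (fderiv ℝ G) p w v :=
  second_derivative_symmetric (fun y => (hG.differentiable (by simp) y).hasFDerivAt)
    (fderiv_hasFDerivAt G hG p) v w

lemma pd_lin (i : Fin 3) (x : V3) (f g : V3 → ℝ) (hf : DifferentiableAt ℝ f x)
    (hg : DifferentiableAt ℝ g x) (a b : ℝ) :
    pd i (fun y => f y * a + g y * b) x = pd i f x * a + pd i g x * b := by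
  unfold pd
  rw [fderiv_fun_add (hf.mul_const a) (hg.mul_const b), fderiv_mul_const hf, fderiv_mul_const hg]
  simp [mul_comm]


/-- the explicit time-nonlocal energy conservation law obtained
from the adjoint solution V = (e^{σₘt},0,0), W = (e^{σₑt},0,0). -/
theorem stmt15 (σe σm : ℝ) (E B : V3 → ℝ → V3)
    (hE : Smooth2 E) (hB : Smooth2 B)
    (h1 : ∀ x t, curl3 (fun y => E y t) x + dt B x t + σm • B x t = 0)
    (h2 : ∀ x t, curl3 (fun y => B y t) x - dt E x t - σe • E x t = 0) :
    ∀ x t,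
      deriv (fun s =>
          (pd 1 (fun y => B y s 2) x - pd 2 (fun y => B y s 1) x - σe * E x s 0)
              * Real.exp (σe * s)
          + (pd 1 (fun y => E y s 2) x - pd 2 (fun y => E y s 1) x + σm * B x s 0)
              * Real.exp (σm * s)) t
        + div3 (fun y =>
            ![0,
              - dt E y t 2 * Real.exp (σm * t) - dt B y t 2 * Real.exp (σe * t),
              dt E y t 1 * Real.exp (σm * t) + dt B y t 1 * Real.exp (σe * t)]) x
        = 0 := by
  intro x t
  have hGE : ∀ i, ContDiff ℝ (⊤ : ℕ∞) (fun p : V3 × ℝ => E p.1 p.2 i) := fun i => contDiff_pi.1 hE i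
  have hGB : ∀ i, ContDiff ℝ (⊤ : ℕ∞) (fun p : V3 × ℝ => B p.1 p.2 i) := fun i => contDiff_pi.1 hB i
  set vt : V3 × ℝ := ((0 : V3), (1 : ℝ)) with hvt
  -- Step 1: rewrite the time-derivative integrand using the field equations
  have hfun : (fun s =>
          (pd 1 (fun y => B y s 2) x - pd 2 (fun y => B y s 1) x - σe * E x s 0)
              * Real.exp (σe * s)
          + (pd 1 (fun y => E y s 2) x - pd 2 (fun y => E y s 1) x + σm * B x s 0)
              * Real.exp (σm * s))
      = (fun s => (fderiv ℝ (fun p : V3 × ℝ => E p.1 p.2 0) (x, s) vt) * Real.exp (σe * s)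
          + (-(fderiv ℝ (fun p : V3 × ℝ => B p.1 p.2 0) (x, s) vt)) * Real.exp (σm * s)) := by
    funext s
    have h1' := congrFun (h1 x s) 0
    have h2' := congrFun (h2 x s) 0
    simp only [curl3, dt, Pi.add_apply, Pi.sub_apply, Pi.smul_apply, smul_eq_mul,
      Pi.zero_apply, Matrix.cons_val_zero, Matrix.vecHead] at h1' h2'
    have he : deriv (fun u => E x u 0) s
        = fderiv ℝ (fun p : V3 × ℝ => E p.1 p.2 0) (x, s) vt :=
      (hasDerivAt_time _ (hGE 0) x s).deriv
    have hb : deriv (fun u => B x u 0) s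
        = fderiv ℝ (fun p : V3 × ℝ => B p.1 p.2 0) (x, s) vt :=
      (hasDerivAt_time _ (hGB 0) x s).deriv
    rw [← he, ← hb]
    linear_combination Real.exp (σe * s) * h2' + Real.exp (σm * s) * h1'
  rw [hfun]
  -- Step 2: compute the time derivative
  have hEexp : HasDerivAt (fun s => Real.exp (σe * s)) (Real.exp (σe * t) * (σe * 1)) t :=
    (((hasDerivAt_id t).const_mul σe).exp)
  have hMexp : HasDerivAt (fun s => Real.exp (σm * s)) (Real.exp (σm * t) * (σm * 1)) t :=
    (((hasDerivAt_id t).const_mul σm).exp)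
  have hτ : HasDerivAt (fun s =>
        (fderiv ℝ (fun p : V3 × ℝ => E p.1 p.2 0) (x, s) vt) * Real.exp (σe * s)
        + (-(fderiv ℝ (fun p : V3 × ℝ => B p.1 p.2 0) (x, s) vt)) * Real.exp (σm * s))
      ((fderiv ℝ (fderiv ℝ (fun p : V3 × ℝ => E p.1 p.2 0)) (x, t) vt vt) * Real.exp (σe * t)
        + (fderiv ℝ (fun p : V3 × ℝ => E p.1 p.2 0) (x, t) vt) * (Real.exp (σe * t) * (σe * 1))
        + ((-(fderiv ℝ (fderiv ℝ (fun p : V3 × ℝ => B p.1 p.2 0)) (x, t) vt vt)) * Real.exp (σm * t)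
          + (-(fderiv ℝ (fun p : V3 × ℝ => B p.1 p.2 0) (x, t) vt)) * (Real.exp (σm * t) * (σm * 1)))) t :=
    ((hasDerivAt_time_D _ (hGE 0) x t vt).mul hEexp).add
      (((hasDerivAt_time_D _ (hGB 0) x t vt).neg).mul hMexp)
  rw [hτ.deriv]
  -- Step 3: compute the divergence
  rw [div3]
  have hz : pd 0 (fun y =>
      (![0, - dt E y t 2 * Real.exp (σm * t) - dt B y t 2 * Real.exp (σe * t),
          dt E y t 1 * Real.exp (σm * t) + dt B y t 1 * Real.exp (σe * t)] : V3) 0) x = 0 := by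
    simp only [Matrix.cons_val_zero]
    unfold pd
    rw [fderiv_fun_const]
    simp
  have hc1 : (fun y =>
      (![0, - dt E y t 2 * Real.exp (σm * t) - dt B y t 2 * Real.exp (σe * t),
          dt E y t 1 * Real.exp (σm * t) + dt B y t 1 * Real.exp (σe * t)] : V3) 1)
      = (fun y => (fderiv ℝ (fun p : V3 × ℝ => E p.1 p.2 2) (y, t) vt) * (-(Real.exp (σm * t)))
          + (fderiv ℝ (fun p : V3 × ℝ => B p.1 p.2 2) (y, t) vt) * (-(Real.exp (σe * t)))) := by
    funext y
    simp only [Matrix.cons_val_one, Matrix.head_cons, Matrix.cons_val_zero, dt]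
    rw [(hasDerivAt_time _ (hGE 2) y t).deriv, (hasDerivAt_time _ (hGB 2) y t).deriv]
    ring
  have hc2 : (fun y =>
      (![0, - dt E y t 2 * Real.exp (σm * t) - dt B y t 2 * Real.exp (σe * t),
          dt E y t 1 * Real.exp (σm * t) + dt B y t 1 * Real.exp (σe * t)] : V3) 2)
      = (fun y => (fderiv ℝ (fun p : V3 × ℝ => E p.1 p.2 1) (y, t) vt) * (Real.exp (σm * t))
          + (fderiv ℝ (fun p : V3 × ℝ => B p.1 p.2 1) (y, t) vt) * (Real.exp (σe * t))) := by
    funext y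
    simp only [Matrix.cons_val_two, Matrix.tail_cons, Matrix.head_cons, dt]
    rw [(hasDerivAt_time _ (hGE 1) y t).deriv, (hasDerivAt_time _ (hGB 1) y t).deriv]
  rw [hz, hc1, hc2,
    pd_lin 1 x _ _ (diff_D _ (hGE 2) t x vt) (diff_D _ (hGB 2) t x vt),
    pd_lin 2 x _ _ (diff_D _ (hGE 1) t x vt) (diff_D _ (hGB 1) t x vt),
    pd_D _ (hGE 2) 1 t x vt, pd_D _ (hGB 2) 1 t x vt,
    pd_D _ (hGE 1) 2 t x vt, pd_D _ (hGB 1) 2 t x vt]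
  -- Step 4: differentiate the field equations in time
  have R1 : fderiv ℝ (fderiv ℝ (fun p : V3 × ℝ => E p.1 p.2 2)) (x, t) vt (Pi.single 1 1, 0)
        - fderiv ℝ (fderiv ℝ (fun p : V3 × ℝ => E p.1 p.2 1)) (x, t) vt (Pi.single 2 1, 0)
      = -(fderiv ℝ (fderiv ℝ (fun p : V3 × ℝ => B p.1 p.2 0)) (x, t) vt vt)
        - σm * fderiv ℝ (fun p : V3 × ℝ => B p.1 p.2 0) (x, t) vt := by
    have hL : HasDerivAt (fun s =>
          fderiv ℝ (fun p : V3 × ℝ => E p.1 p.2 2) (x, s) (Pi.single 1 1, 0)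
          - fderiv ℝ (fun p : V3 × ℝ => E p.1 p.2 1) (x, s) (Pi.single 2 1, 0))
        (fderiv ℝ (fderiv ℝ (fun p : V3 × ℝ => E p.1 p.2 2)) (x, t) vt (Pi.single 1 1, 0)
          - fderiv ℝ (fderiv ℝ (fun p : V3 × ℝ => E p.1 p.2 1)) (x, t) vt (Pi.single 2 1, 0)) t :=
      (hasDerivAt_time_D _ (hGE 2) x t _).sub (hasDerivAt_time_D _ (hGE 1) x t _)
    have hR : HasDerivAt (fun s =>
          -(fderiv ℝ (fun p : V3 × ℝ => B p.1 p.2 0) (x, s) vt) - σm * B x s 0)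
        (-(fderiv ℝ (fderiv ℝ (fun p : V3 × ℝ => B p.1 p.2 0)) (x, t) vt vt)
          - σm * fderiv ℝ (fun p : V3 × ℝ => B p.1 p.2 0) (x, t) vt) t :=
      ((hasDerivAt_time_D _ (hGB 0) x t vt).neg).sub
        ((hasDerivAt_time _ (hGB 0) x t).const_mul σm)
    have hfe : (fun s =>
          fderiv ℝ (fun p : V3 × ℝ => E p.1 p.2 2) (x, s) (Pi.single 1 1, 0)
          - fderiv ℝ (fun p : V3 × ℝ => E p.1 p.2 1) (x, s) (Pi.single 2 1, 0))
        = (fun s => -(fderiv ℝ (fun p : V3 × ℝ => B p.1 p.2 0) (x, s) vt) - σm * B x s 0) := by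
      funext s
      have h1' := congrFun (h1 x s) 0
      simp only [curl3, dt, Pi.add_apply, Pi.sub_apply, Pi.smul_apply, smul_eq_mul,
        Pi.zero_apply, Matrix.cons_val_zero, Matrix.vecHead] at h1'
      rw [← pd_slice _ (hGE 2) 1 s x, ← pd_slice _ (hGE 1) 2 s x,
        ← (hasDerivAt_time _ (hGB 0) x s).deriv]
      linarith
    rw [hfe] at hL
    exact hL.unique hR
  have R2 : fderiv ℝ (fderiv ℝ (fun p : V3 × ℝ => B p.1 p.2 2)) (x, t) vt (Pi.single 1 1, 0)
        - fderiv ℝ (fderiv ℝ (fun p : V3 × ℝ => B p.1 p.2 1)) (x, t) vt (Pi.single 2 1, 0)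
      = (fderiv ℝ (fderiv ℝ (fun p : V3 × ℝ => E p.1 p.2 0)) (x, t) vt vt)
        + σe * fderiv ℝ (fun p : V3 × ℝ => E p.1 p.2 0) (x, t) vt := by
    have hL : HasDerivAt (fun s =>
          fderiv ℝ (fun p : V3 × ℝ => B p.1 p.2 2) (x, s) (Pi.single 1 1, 0)
          - fderiv ℝ (fun p : V3 × ℝ => B p.1 p.2 1) (x, s) (Pi.single 2 1, 0))
        (fderiv ℝ (fderiv ℝ (fun p : V3 × ℝ => B p.1 p.2 2)) (x, t) vt (Pi.single 1 1, 0)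
          - fderiv ℝ (fderiv ℝ (fun p : V3 × ℝ => B p.1 p.2 1)) (x, t) vt (Pi.single 2 1, 0)) t :=
      (hasDerivAt_time_D _ (hGB 2) x t _).sub (hasDerivAt_time_D _ (hGB 1) x t _)
    have hR : HasDerivAt (fun s =>
          (fderiv ℝ (fun p : V3 × ℝ => E p.1 p.2 0) (x, s) vt) + σe * E x s 0)
        ((fderiv ℝ (fderiv ℝ (fun p : V3 × ℝ => E p.1 p.2 0)) (x, t) vt vt)
          + σe * fderiv ℝ (fun p : V3 × ℝ => E p.1 p.2 0) (x, t) vt) t :=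
      (hasDerivAt_time_D _ (hGE 0) x t vt).add
        ((hasDerivAt_time _ (hGE 0) x t).const_mul σe)
    have hfe : (fun s =>
          fderiv ℝ (fun p : V3 × ℝ => B p.1 p.2 2) (x, s) (Pi.single 1 1, 0)
          - fderiv ℝ (fun p : V3 × ℝ => B p.1 p.2 1) (x, s) (Pi.single 2 1, 0))
        = (fun s => (fderiv ℝ (fun p : V3 × ℝ => E p.1 p.2 0) (x, s) vt) + σe * E x s 0) := by
      funext s
      have h2' := congrFun (h2 x s) 0
      simp only [curl3, dt, Pi.add_apply, Pi.sub_apply, Pi.smul_apply, smul_eq_mul,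
        Pi.zero_apply, Matrix.cons_val_zero, Matrix.vecHead] at h2'
      rw [← pd_slice _ (hGB 2) 1 s x, ← pd_slice _ (hGB 1) 2 s x,
        ← (hasDerivAt_time _ (hGE 0) x s).deriv]
      linarith
    rw [hfe] at hL
    exact hL.unique hR
  -- Step 5: symmetrize and finish
  rw [DD_symm _ (hGE 2) (x, t) (Pi.single 1 1, 0) vt,
    DD_symm _ (hGE 1) (x, t) (Pi.single 2 1, 0) vt,
    DD_symm _ (hGB 2) (x, t) (Pi.single 1 1, 0) vt,
    DD_symm _ (hGB 1) (x, t) (Pi.single 2 1, 0) vt]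
  linear_combination (-(Real.exp (σm * t))) * R1 + (-(Real.exp (σe * t))) * R2
end
end
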